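/- arXiv:2310.15474 — 2 statements merged into one kernel-verified Lean document; each statement's English description precedes it below -/
import Mathlib

section
/- Let n ≥ 4. The kernel of the ℂ-algebra homomorphism φ : S → R equals the ideal of S generated by the following quadratic polynomials: (1) ψ_{il}ψ_{jk} − ψ_{ik}ψ_{jl} + ψ_{ij}ψ_{kl} for 1 ≤ i < j < k < l ≤ n; (2) ψ_{in}ξ_{jn} − ψ_{jn}ξ_{in} for 1 ≤ i < j < n; (3) ψ_{1j}ξ_{kn} − ψ_{kn}ξ_{1j} for 1 < j < n and 1 < k < n; (4) ψ_{1k}ξ_{1l} − ψ_{1l}ξ_{1k} for 1 < k < l ≤ n; (5) ξ_{1l}ψ_{jk} − ξ_{1k}ψ_{jl} + ξ_{1j}ψ_{kl} for 1 < j < k < l < n; (6) ξ_{in}ψ_{jk} − ξ_{jn}ψ_{ik} + ξ_{kn}ψ_{ij} for 1 ≤ i < j < k < n. -/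
open MvPolynomial

/-- Variables of the ring `R`: `s`, `t`, and `x_{1,j}`, `x_{2,j}`. -/
inductive RVar : Type
  | s : RVar
  | t : RVar
  | x1 : ℕ → RVar
  | x2 : ℕ → RVar

/-- The polynomial ring `R = ℂ[s, t, x_{1,j}, x_{2,j}]`. -/
abbrev Rring : Type := MvPolynomial RVar ℂ

/-- The `2×2` minor `m_{ij}` on columns `i < j` of the `2×n` matrix whose first
column is `(1,0)ᵀ`, last column is `(0,1)ᵀ`, and `j`-th column is
`(x_{1,j}, x_{2,j})ᵀ` for `1 < j < n`:  `m_{1n} = 1`, `m_{1i} = x_{2,i}`,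
`m_{jn} = x_{1,j}`, and `m_{ij} = x_{1,i}x_{2,j} − x_{1,j}x_{2,i}`. -/
noncomputable def minor (n i j : ℕ) : Rring :=
  if i = 1 ∧ j = n then 1
  else if i = 1 then X (RVar.x2 j)
  else if j = n then X (RVar.x1 i)
  else X (RVar.x1 i) * X (RVar.x2 j) - X (RVar.x1 j) * X (RVar.x2 i)

/-- Variables of the ring `S`: ψ-variables `(true,(i,j))` for all pairs
`1 ≤ i < j ≤ n`, and ξ-variables `(false,(i,j))` for those pairs with
`i = 1` or `j = n`. -/
def SVar (n : ℕ) : Type :=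
  {v : Bool × ℕ × ℕ //
    1 ≤ v.2.1 ∧ v.2.1 < v.2.2 ∧ v.2.2 ≤ n ∧ (v.1 = true ∨ v.2.1 = 1 ∨ v.2.2 = n)}

/-- The polynomial ring `S = ℂ[ψ_{ij}, ξ_{ij}]`. -/
abbrev Sring (n : ℕ) : Type := MvPolynomial (SVar n) ℂ

/-- The variable `ψ_{ij}` of `S` (for `1 ≤ i < j ≤ n`). -/
noncomputable def psi (n i j : ℕ) : Sring n :=
  if h : 1 ≤ i ∧ i < j ∧ j ≤ n then
    X ⟨(true, i, j), ⟨h.1, h.2.1, h.2.2, Or.inl rfl⟩⟩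
  else 0

/-- The variable `ξ_{ij}` of `S` (for `1 ≤ i < j ≤ n` with `i = 1` or `j = n`). -/
noncomputable def xi (n i j : ℕ) : Sring n :=
  if h : 1 ≤ i ∧ i < j ∧ j ≤ n ∧ (i = 1 ∨ j = n) then
    X ⟨(false, i, j), ⟨h.1, h.2.1, h.2.2.1, Or.inr h.2.2.2⟩⟩
  else 0

/-- The ℂ-algebra homomorphism `φ : S → R`, `ψ_{ij} ↦ t·m_{ij}`, `ξ_{ij} ↦ s·m_{ij}`. -/
noncomputable def phi (n : ℕ) : Sring n →ₐ[ℂ] Rring :=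
  aeval fun v : SVar n =>
    (if v.1.1 = true then X RVar.t else X RVar.s) * minor n v.1.2.1 v.1.2.2


/-- The six families of quadratic generators of the ideal of the graph `G(2,n)`. -/
noncomputable def graphGens (n : ℕ) : Set (Sring n) :=
  {p | ∃ i j k l, 1 ≤ i ∧ i < j ∧ j < k ∧ k < l ∧ l ≤ n ∧
      p = psi n i l * psi n j k - psi n i k * psi n j l + psi n i j * psi n k l} ∪
  {p | ∃ i j, 1 ≤ i ∧ i < j ∧ j < n ∧
      p = psi n i n * xi n j n - psi n j n * xi n i n} ∪
  {p | ∃ j k, 1 < j ∧ j < n ∧ 1 < k ∧ k < n ∧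
      p = psi n 1 j * xi n k n - psi n k n * xi n 1 j} ∪
  {p | ∃ k l, 1 < k ∧ k < l ∧ l ≤ n ∧
      p = psi n 1 k * xi n 1 l - psi n 1 l * xi n 1 k} ∪
  {p | ∃ j k l, 1 < j ∧ j < k ∧ k < l ∧ l < n ∧
      p = xi n 1 l * psi n j k - xi n 1 k * psi n j l + xi n 1 j * psi n k l} ∪
  {p | ∃ i j k, 1 ≤ i ∧ i < j ∧ j < k ∧ k < n ∧
      p = xi n i n * psi n j k - xi n j n * psi n i k + xi n k n * psi n i j}

-- ====================== auxiliary development ======================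
namespace KerPhiAux

/-- color of a variable -/
def col {n : ℕ} (v : SVar n) : Bool := v.1.1
def vfst {n : ℕ} (v : SVar n) : ℕ := v.1.2.1
def vsnd {n : ℕ} (v : SVar n) : ℕ := v.1.2.2

lemma vfst_pos {n : ℕ} (v : SVar n) : 1 ≤ vfst v := v.2.1
lemma vfst_lt_vsnd {n : ℕ} (v : SVar n) : vfst v < vsnd v := v.2.2.1
lemma vsnd_le {n : ℕ} (v : SVar n) : vsnd v ≤ n := v.2.2.2.1
lemma col_or {n : ℕ} (v : SVar n) : col v = true ∨ vfst v = 1 ∨ vsnd v = n := v.2.2.2.2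

lemma xi_boundary {n : ℕ} (v : SVar n) (h : col v = false) : vfst v = 1 ∨ vsnd v = n := by
  rcases col_or v with h' | h' | h'
  · rw [h] at h'; exact absurd h' (by simp)
  · exact Or.inl h'
  · exact Or.inr h'

/-- the ψ-variable with indices i, j -/
def pv (n i j : ℕ) (h1 : 1 ≤ i) (h2 : i < j) (h3 : j ≤ n) : SVar n :=
  ⟨(true, i, j), ⟨h1, h2, h3, Or.inl rfl⟩⟩

/-- the ξ-variable with indices i, j -/
def xv (n i j : ℕ) (h1 : 1 ≤ i) (h2 : i < j) (h3 : j ≤ n) (h4 : i = 1 ∨ j = n) : SVar n :=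
  ⟨(false, i, j), ⟨h1, h2, h3, Or.inr h4⟩⟩

lemma psi_eq {n i j : ℕ} (h1 : 1 ≤ i) (h2 : i < j) (h3 : j ≤ n) :
    psi n i j = X (pv n i j h1 h2 h3) := by
  rw [psi, dif_pos ⟨h1, h2, h3⟩]; rfl

lemma xi_eq {n i j : ℕ} (h1 : 1 ≤ i) (h2 : i < j) (h3 : j ≤ n) (h4 : i = 1 ∨ j = n) :
    xi n i j = X (xv n i j h1 h2 h3 h4) := by
  rw [xi, dif_pos ⟨h1, h2, h3, h4⟩]; rfl

lemma phi_X {n : ℕ} (v : SVar n) :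
    phi n (X v) = (if col v = true then X RVar.t else X RVar.s) * minor n (vfst v) (vsnd v) := by
  simp [phi, aeval_X, col, vfst, vsnd]
  split_ifs with h <;> simp [h]

-- minor unfolding lemmas
lemma minor_1n (n : ℕ) : minor n 1 n = 1 := by rw [minor, if_pos ⟨rfl, rfl⟩]

lemma minor_left {n j : ℕ} (h : j ≠ n) : minor n 1 j = X (RVar.x2 j) := by
  rw [minor, if_neg (by tauto), if_pos rfl]

lemma minor_right {n i : ℕ} (h : i ≠ 1) : minor n i n = X (RVar.x1 i) := by
  rw [minor, if_neg (by tauto), if_neg h, if_pos rfl]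

lemma minor_mid {n i j : ℕ} (h1 : i ≠ 1) (h2 : j ≠ n) :
    minor n i j = X (RVar.x1 i) * X (RVar.x2 j) - X (RVar.x1 j) * X (RVar.x2 i) := by
  rw [minor, if_neg (by tauto), if_neg h1, if_neg h2]

/-- the Plücker relation for the minors -/
lemma minor_plucker {n i j k l : ℕ} (h1 : 1 ≤ i) (h2 : i < j) (h3 : j < k) (h4 : k < l)
    (h5 : l ≤ n) :
    minor n i l * minor n j k - minor n i k * minor n j l + minor n i j * minor n k l = 0 := by
  have hj1 : j ≠ 1 := by omega
  have hk1 : k ≠ 1 := by omega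
  have hjn : j ≠ n := by omega
  have hkn : k ≠ n := by omega
  rcases eq_or_ne i 1 with hi | hi <;> rcases eq_or_ne l n with hl | hl <;> subst_vars
  · rw [minor_1n, minor_mid hj1 hkn, minor_left hkn, minor_right hj1,
      minor_left hjn, minor_right hk1]; ring
  · rw [minor_left (by omega), minor_mid hj1 hkn, minor_left hkn,
      minor_mid hj1 hl, minor_left hjn, minor_mid hk1 hl]; ring
  · rw [minor_right hi, minor_mid hj1 hkn, minor_mid hi hkn, minor_right hj1,
      minor_mid hi hjn, minor_right hk1]; ring
  · rw [minor_mid hi hl, minor_mid hj1 hkn, minor_mid hi hkn, minor_mid hj1 hl,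
      minor_mid hi hjn, minor_mid hk1 hl]; ring

lemma phi_psi {n i j : ℕ} (h1 : 1 ≤ i) (h2 : i < j) (h3 : j ≤ n) :
    phi n (psi n i j) = X RVar.t * minor n i j := by
  rw [psi_eq h1 h2 h3, phi_X]; rfl

lemma phi_xi {n i j : ℕ} (h1 : 1 ≤ i) (h2 : i < j) (h3 : j ≤ n) (h4 : i = 1 ∨ j = n) :
    phi n (xi n i j) = X RVar.s * minor n i j := by
  rw [xi_eq h1 h2 h3 h4, phi_X]; rfl

/-- easy direction: generators are in the kernel -/
lemma span_le_ker (n : ℕ) (hn : 4 ≤ n) :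
    Ideal.span (graphGens n) ≤ RingHom.ker (phi n) := by
  rw [Ideal.span_le]
  rintro p (((((⟨i, j, k, l, h1, h2, h3, h4, h5, rfl⟩ | ⟨i, j, h1, h2, h3, rfl⟩) |
    ⟨j, k, h1, h2, h3, h4, rfl⟩) | ⟨k, l, h1, h2, h3, rfl⟩) |
    ⟨j, k, l, h1, h2, h3, h4, rfl⟩) | ⟨i, j, k, h1, h2, h3, h4, rfl⟩) <;>
    simp only [SetLike.mem_coe, RingHom.mem_ker, map_add, map_sub, map_mul]
  · rw [phi_psi (i := i) (j := l) (by omega) (by omega) (by omega),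
      phi_psi (i := j) (j := k) (by omega) (by omega) (by omega),
      phi_psi (i := i) (j := k) (by omega) (by omega) (by omega),
      phi_psi (i := j) (j := l) (by omega) (by omega) (by omega),
      phi_psi (i := i) (j := j) (by omega) (by omega) (by omega),
      phi_psi (i := k) (j := l) (by omega) (by omega) (by omega)]
    linear_combination (X RVar.t * X RVar.t : Rring) *
      minor_plucker (n := n) h1 h2 h3 h4 h5
  · rw [phi_psi (i := i) (j := n) (by omega) (by omega) (by omega),
      phi_psi (i := j) (j := n) (by omega) (by omega) (by omega),
      phi_xi (i := j) (j := n) (by omega) (by omega) (by omega) (Or.inr rfl),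
      phi_xi (i := i) (j := n) (by omega) (by omega) (by omega) (Or.inr rfl)]
    ring
  · rw [phi_psi (i := 1) (j := j) (by omega) (by omega) (by omega),
      phi_psi (i := k) (j := n) (by omega) (by omega) (by omega),
      phi_xi (i := k) (j := n) (by omega) (by omega) (by omega) (Or.inr rfl),
      phi_xi (i := 1) (j := j) (by omega) (by omega) (by omega) (Or.inl rfl)]
    ring
  · rw [phi_psi (i := 1) (j := k) (by omega) (by omega) (by omega),
      phi_psi (i := 1) (j := l) (by omega) (by omega) (by omega),
      phi_xi (i := 1) (j := l) (by omega) (by omega) (by omega) (Or.inl rfl),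
      phi_xi (i := 1) (j := k) (by omega) (by omega) (by omega) (Or.inl rfl)]
    ring
  · rw [phi_psi (i := j) (j := k) (by omega) (by omega) (by omega),
      phi_psi (i := j) (j := l) (by omega) (by omega) (by omega),
      phi_psi (i := k) (j := l) (by omega) (by omega) (by omega),
      phi_xi (i := 1) (j := l) (by omega) (by omega) (by omega) (Or.inl rfl),
      phi_xi (i := 1) (j := k) (by omega) (by omega) (by omega) (Or.inl rfl),
      phi_xi (i := 1) (j := j) (by omega) (by omega) (by omega) (Or.inl rfl)]
    linear_combination (X RVar.s * X RVar.t : Rring) *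
      minor_plucker (n := n) (i := 1) (j := j) (k := k) (l := l)
        (by omega) (by omega) (by omega) (by omega) (by omega)
  · rw [phi_psi (i := j) (j := k) (by omega) (by omega) (by omega),
      phi_psi (i := i) (j := k) (by omega) (by omega) (by omega),
      phi_psi (i := i) (j := j) (by omega) (by omega) (by omega),
      phi_xi (i := i) (j := n) (by omega) (by omega) (by omega) (Or.inr rfl),
      phi_xi (i := j) (j := n) (by omega) (by omega) (by omega) (Or.inr rfl),
      phi_xi (i := k) (j := n) (by omega) (by omega) (by omega) (Or.inr rfl)]
    linear_combination (X RVar.s * X RVar.t : Rring) *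
      minor_plucker (n := n) (i := i) (j := j) (k := k) (l := n) h1 h2 h3 (by omega) (by omega)

-- ================= spanning machinery =================

open Finsupp

variable {n : ℕ}

/-- reconstruct a ψ-variable -/
lemma eq_pv {v : SVar n} (h : col v = true) :
    v = pv n (vfst v) (vsnd v) (vfst_pos v) (vfst_lt_vsnd v) (vsnd_le v) := by
  obtain ⟨⟨a, b, c⟩, hv⟩ := v
  have : a = true := h
  subst this; rfl

lemma eq_xv {v : SVar n} (h : col v = false) :
    v = xv n (vfst v) (vsnd v) (vfst_pos v) (vfst_lt_vsnd v) (vsnd_le v) (xi_boundary v h) := by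
  obtain ⟨⟨a, b, c⟩, hv⟩ := v
  have : a = false := h
  subst this; rfl

abbrev SM (n : ℕ) := SVar n →₀ ℕ

def wt (v : SVar n) : ℕ := (vsnd v - vfst v) ^ 2
def cwt (v : SVar n) : ℕ := if col v then 0 else vfst v + vsnd v
def degM (μ : SM n) : ℕ := μ.sum fun _ k => k
def mM (μ : SM n) : ℕ := μ.sum fun v k => k * wt v
def cM (μ : SM n) : ℕ := μ.sum fun v k => k * cwt v
def meas (n : ℕ) (μ : SM n) : ℕ := mM μ * (2 * n * degM μ + 1) + cM μ

lemma degM_add (μ ν : SM n) : degM (μ + ν) = degM μ + degM ν :=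
  Finsupp.sum_add_index' (fun _ => rfl) (fun _ _ _ => rfl)
lemma mM_add (μ ν : SM n) : mM (μ + ν) = mM μ + mM ν :=
  Finsupp.sum_add_index' (fun _ => zero_mul _) (fun a b c => add_mul b c _)
lemma cM_add (μ ν : SM n) : cM (μ + ν) = cM μ + cM ν :=
  Finsupp.sum_add_index' (fun _ => zero_mul _) (fun a b c => add_mul b c _)
lemma mM_single (v : SVar n) (k : ℕ) : mM (single v k) = k * wt v := by
  rw [mM]; exact Finsupp.sum_single_index (zero_mul _)
lemma cM_single (v : SVar n) (k : ℕ) : cM (single v k) = k * cwt v := by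
  rw [cM]; exact Finsupp.sum_single_index (zero_mul _)
lemma degM_single' (v : SVar n) (k : ℕ) : degM (single v k) = k := by
  rw [degM]; exact Finsupp.sum_single_index rfl

lemma cwt_le (v : SVar n) : cwt v ≤ 2 * n := by
  have h1 := vfst_lt_vsnd v
  have h2 := vsnd_le v
  rw [cwt]; split <;> omega

lemma cM_le (μ : SM n) : cM μ ≤ 2 * n * degM μ := by
  induction μ using Finsupp.induction with
  | zero => simp [cM, degM]
  | single_add a b f _ _ ih =>
    rw [cM_add, degM_add, cM_single, degM_single']
    have h := cwt_le a
    nlinarith [ih]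

/-- the notion of a standard monomial -/
def Std (μ : SM n) : Prop := ∀ v ∈ μ.support, ∀ w ∈ μ.support,
  ((vfst v ≤ vfst w ∧ vsnd v ≤ vsnd w) ∨ (vfst w ≤ vfst v ∧ vsnd w ≤ vsnd v)) ∧
  ¬(col v = true ∧ col w = false ∧ (vfst v = 1 ∨ vsnd v = n) ∧
    (vfst v ≤ vfst w ∧ vsnd v ≤ vsnd w ∧ ¬(vfst v = vfst w ∧ vsnd v = vsnd w)))

/-- the submodule: ideal generated by the quadrics together with standard monomials -/
noncomputable def KK (n : ℕ) : Submodule ℂ (Sring n) :=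
  (Ideal.span (graphGens n)).restrictScalars ℂ ⊔
    Submodule.span ℂ {p | ∃ μ : SM n, Std μ ∧ p = monomial μ 1}

lemma mono_split (μ : SM n) (v w : SVar n) (hvw : v ≠ w) (hv : 1 ≤ μ v) (hw : 1 ≤ μ w) :
    μ = (μ - single v 1 - single w 1) + single v 1 + single w 1 := by
  classical
  ext a
  rw [Finsupp.add_apply, Finsupp.add_apply, Finsupp.tsub_apply, Finsupp.tsub_apply,
    Finsupp.single_apply, Finsupp.single_apply]
  by_cases h1 : v = a
  · by_cases h2 : w = a
    · exact absurd (h1.trans h2.symm) hvw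
    · subst h1; rw [if_pos rfl, if_neg h2]; omega
  · by_cases h2 : w = a
    · subst h2; rw [if_neg h1, if_pos rfl]; omega
    · rw [if_neg h1, if_neg h2]; omega

lemma KK_step (μ' : SM n) (v w v1 w1 v2 w2 : SVar n) (c1 c2 : ℂ)
    (hg : (X v * X w : Sring n) - (C c1 * (X v1 * X w1) + C c2 * (X v2 * X w2))
      ∈ Ideal.span (graphGens n))
    (h1 : (monomial (μ' + single v1 1 + single w1 1) (1:ℂ) : Sring n) ∈ KK n)
    (h2 : (monomial (μ' + single v2 1 + single w2 1) (1:ℂ) : Sring n) ∈ KK n) :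
    (monomial (μ' + single v 1 + single w 1) (1:ℂ) : Sring n) ∈ KK n := by
  have key : ∀ a b : SVar n, (monomial (μ' + single a 1 + single b 1) (1:ℂ) : Sring n)
      = X a * X b * monomial μ' 1 := by
    intro a b
    rw [X, X, monomial_mul, monomial_mul, one_mul, one_mul]
    congr 1
    abel
  rw [key]
  have expand : (X v * X w * monomial μ' 1 : Sring n)
      = (X v * X w - (C c1 * (X v1 * X w1) + C c2 * (X v2 * X w2))) * monomial μ' 1
        + C c1 * (X v1 * X w1 * monomial μ' 1) + C c2 * (X v2 * X w2 * monomial μ' 1) := by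
    ring
  rw [expand]
  refine add_mem (add_mem ?_ ?_) ?_
  · exact Submodule.mem_sup_left (Ideal.mul_mem_right _ _ hg)
  · rw [← key, ← smul_eq_C_mul]
    exact Submodule.smul_mem _ _ h1
  · rw [← key, ← smul_eq_C_mul]
    exact Submodule.smul_mem _ _ h2

lemma meas_lt (μ' : SM n) (v w v1 w1 : SVar n)
    (h : wt v1 + wt w1 < wt v + wt w ∨
      (wt v1 + wt w1 = wt v + wt w ∧ cwt v1 + cwt w1 < cwt v + cwt w)) :
    meas n (μ' + single v1 1 + single w1 1) < meas n (μ' + single v 1 + single w 1) := by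
  have e1 : ∀ a b : SVar n, meas n (μ' + single a 1 + single b 1)
      = (mM μ' + wt a + wt b) * (2*n*(degM μ' + 2) + 1) + (cM μ' + cwt a + cwt b) := by
    intro a b
    simp only [meas, mM_add, cM_add, degM_add, mM_single, cM_single, degM_single']
    ring
  rw [e1, e1]
  have hE : 2*n*(degM μ' + 2)+1 = 2*n*degM μ' + 4*n + 1 := by ring
  have hc : cwt v1 + cwt w1 ≤ 4*n := by
    have := cwt_le v1; have := cwt_le w1; omega
  rcases h with h | ⟨heq, h2⟩
  · have key : (mM μ' + wt v1 + wt w1 + 1) * (2*n*(degM μ' + 2)+1)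
        ≤ (mM μ' + wt v + wt w) * (2*n*(degM μ' + 2)+1) := Nat.mul_le_mul_right _ (by omega)
    have key2 : (mM μ' + wt v1 + wt w1 + 1) * (2*n*(degM μ' + 2)+1)
        = (mM μ' + wt v1 + wt w1) * (2*n*(degM μ' + 2)+1) + (2*n*(degM μ' + 2)+1) := by ring
    omega
  · have e2 : mM μ' + wt v1 + wt w1 = mM μ' + wt v + wt w := by omega
    rw [e2]; omega

lemma wt_ineq1 {i j k l : ℕ} (h2 : i < j) (h3 : j < k) (h4 : k < l) :
    (k - i)^2 + (l - j)^2 < (l - i)^2 + (k - j)^2 := by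
  obtain ⟨a, rfl⟩ : ∃ a, j = i + a + 1 := ⟨j - i - 1, by omega⟩
  obtain ⟨b, rfl⟩ : ∃ b, k = i + a + 1 + b + 1 := ⟨k - (i + a + 1) - 1, by omega⟩
  obtain ⟨c, rfl⟩ : ∃ c, l = i + a + 1 + b + 1 + c + 1 := ⟨l - (i + a + 1 + b + 1) - 1, by omega⟩
  rw [show i + a + 1 + b + 1 - i = a + b + 2 from by omega,
    show i + a + 1 + b + 1 + c + 1 - (i + a + 1) = b + c + 2 from by omega,
    show i + a + 1 + b + 1 + c + 1 - i = a + b + c + 3 from by omega,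
    show i + a + 1 + b + 1 - (i + a + 1) = b + 1 from by omega]
  nlinarith [sq_nonneg (a + c), Nat.zero_le a, Nat.zero_le c]

lemma wt_ineq2 {i j k l : ℕ} (h2 : i < j) (h3 : j < k) (h4 : k < l) :
    (j - i)^2 + (l - k)^2 < (l - i)^2 + (k - j)^2 := by
  obtain ⟨a, rfl⟩ : ∃ a, j = i + a + 1 := ⟨j - i - 1, by omega⟩
  obtain ⟨b, rfl⟩ : ∃ b, k = i + a + 1 + b + 1 := ⟨k - (i + a + 1) - 1, by omega⟩
  obtain ⟨c, rfl⟩ : ∃ c, l = i + a + 1 + b + 1 + c + 1 := ⟨l - (i + a + 1 + b + 1) - 1, by omega⟩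
  rw [show i + a + 1 - i = a + 1 from by omega,
    show i + a + 1 + b + 1 + c + 1 - (i + a + 1 + b + 1) = c + 1 from by omega,
    show i + a + 1 + b + 1 + c + 1 - i = a + b + c + 3 from by omega,
    show i + a + 1 + b + 1 - (i + a + 1) = b + 1 from by omega]
  nlinarith [Nat.zero_le a, Nat.zero_le b, Nat.zero_le c]

-- relation lemmas, in the combination form consumed by `KK_step`
lemma relA1 {i j k l : ℕ} (h1 : 1 ≤ i) (h2 : i < j) (h3 : j < k) (h4 : k < l) (h5 : l ≤ n) :
    (psi n i l * psi n j k : Sring n)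
      - (C 1 * (psi n i k * psi n j l) + C (-1) * (psi n i j * psi n k l))
      ∈ Ideal.span (graphGens n) := by
  have e : (psi n i l * psi n j k : Sring n)
      - (C 1 * (psi n i k * psi n j l) + C (-1) * (psi n i j * psi n k l))
      = psi n i l * psi n j k - psi n i k * psi n j l + psi n i j * psi n k l := by
    rw [map_one, map_neg, map_one]; ring
  rw [e]
  exact Ideal.subset_span
    (Or.inl (Or.inl (Or.inl (Or.inl (Or.inl ⟨i, j, k, l, h1, h2, h3, h4, h5, rfl⟩)))))

lemma relA5 {j k l : ℕ} (h1 : 1 < j) (h2 : j < k) (h3 : k < l) (h4 : l < n) :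
    (xi n 1 l * psi n j k : Sring n)
      - (C 1 * (xi n 1 k * psi n j l) + C (-1) * (xi n 1 j * psi n k l))
      ∈ Ideal.span (graphGens n) := by
  have e : (xi n 1 l * psi n j k : Sring n)
      - (C 1 * (xi n 1 k * psi n j l) + C (-1) * (xi n 1 j * psi n k l))
      = xi n 1 l * psi n j k - xi n 1 k * psi n j l + xi n 1 j * psi n k l := by
    rw [map_one, map_neg, map_one]; ring
  rw [e]
  exact Ideal.subset_span (Or.inl (Or.inr ⟨j, k, l, h1, h2, h3, h4, rfl⟩))

lemma relA6 {i j k : ℕ} (h1 : 1 ≤ i) (h2 : i < j) (h3 : j < k) (h4 : k < n) :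
    (xi n i n * psi n j k : Sring n)
      - (C 1 * (xi n j n * psi n i k) + C (-1) * (xi n k n * psi n i j))
      ∈ Ideal.span (graphGens n) := by
  have e : (xi n i n * psi n j k : Sring n)
      - (C 1 * (xi n j n * psi n i k) + C (-1) * (xi n k n * psi n i j))
      = xi n i n * psi n j k - xi n j n * psi n i k + xi n k n * psi n i j := by
    rw [map_one, map_neg, map_one]; ring
  rw [e]
  exact Ideal.subset_span (Or.inr ⟨i, j, k, h1, h2, h3, h4, rfl⟩)

lemma relB2 {i j : ℕ} (h1 : 1 ≤ i) (h2 : i < j) (h3 : j < n) :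
    (psi n i n * xi n j n : Sring n)
      - (C 1 * (psi n j n * xi n i n) + C 0 * (psi n j n * xi n i n))
      ∈ Ideal.span (graphGens n) := by
  have e : (psi n i n * xi n j n : Sring n)
      - (C 1 * (psi n j n * xi n i n) + C 0 * (psi n j n * xi n i n))
      = psi n i n * xi n j n - psi n j n * xi n i n := by
    rw [map_one, map_zero]; ring
  rw [e]
  exact Ideal.subset_span (Or.inl (Or.inl (Or.inl (Or.inl (Or.inr ⟨i, j, h1, h2, h3, rfl⟩)))))

lemma relB3 {j k : ℕ} (h1 : 1 < j) (h2 : j < n) (h3 : 1 < k) (h4 : k < n) :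
    (psi n 1 j * xi n k n : Sring n)
      - (C 1 * (psi n k n * xi n 1 j) + C 0 * (psi n k n * xi n 1 j))
      ∈ Ideal.span (graphGens n) := by
  have e : (psi n 1 j * xi n k n : Sring n)
      - (C 1 * (psi n k n * xi n 1 j) + C 0 * (psi n k n * xi n 1 j))
      = psi n 1 j * xi n k n - psi n k n * xi n 1 j := by
    rw [map_one, map_zero]; ring
  rw [e]
  exact Ideal.subset_span (Or.inl (Or.inl (Or.inl (Or.inr ⟨j, k, h1, h2, h3, h4, rfl⟩))))

lemma relB4 {k l : ℕ} (h1 : 1 < k) (h2 : k < l) (h3 : l ≤ n) :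
    (psi n 1 k * xi n 1 l : Sring n)
      - (C 1 * (psi n 1 l * xi n 1 k) + C 0 * (psi n 1 l * xi n 1 k))
      ∈ Ideal.span (graphGens n) := by
  have e : (psi n 1 k * xi n 1 l : Sring n)
      - (C 1 * (psi n 1 l * xi n 1 k) + C 0 * (psi n 1 l * xi n 1 k))
      = psi n 1 k * xi n 1 l - psi n 1 l * xi n 1 k := by
    rw [map_one, map_zero]; ring
  rw [e]
  exact Ideal.subset_span (Or.inl (Or.inl (Or.inr ⟨k, l, h1, h2, h3, rfl⟩)))

lemma wt_pv {i j : ℕ} (h1 h2 h3) : wt (pv n i j h1 h2 h3) = (j - i)^2 := rfl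
lemma wt_xv {i j : ℕ} (h1 h2 h3 h4) : wt (xv n i j h1 h2 h3 h4) = (j - i)^2 := rfl
lemma cwt_pv {i j : ℕ} (h1 h2 h3) : cwt (pv n i j h1 h2 h3) = 0 := rfl
lemma cwt_xv {i j : ℕ} (h1 h2 h3 h4) : cwt (xv n i j h1 h2 h3 h4) = i + j := rfl

lemma case_incomp (μ : SM n)
    (hIH : ∀ ν : SM n, meas n ν < meas n μ → (monomial ν (1:ℂ) : Sring n) ∈ KK n)
    (v w : SVar n) (hv : v ∈ μ.support) (hw : w ∈ μ.support)
    (hf : vfst v < vfst w) (hs : vsnd w < vsnd v) :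
    (monomial μ (1:ℂ) : Sring n) ∈ KK n := by
  have hvw : v ≠ w := fun h => by rw [h] at hf; omega
  have hμv : 1 ≤ μ v := Nat.pos_of_ne_zero (Finsupp.mem_support_iff.mp hv)
  have hμw : 1 ≤ μ w := Nat.pos_of_ne_zero (Finsupp.mem_support_iff.mp hw)
  have hjk : vfst w < vsnd w := vfst_lt_vsnd w
  have hi1 : 1 ≤ vfst v := vfst_pos v
  have hln : vsnd v ≤ n := vsnd_le v
  have hwn : vsnd w ≤ n := vsnd_le w
  have hcw : col w = true := by
    rcases col_or w with h | h | h
    · exact h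
    · omega
    · omega
  have hsplit := mono_split μ v w hvw hμv hμw
  have hwv : wt v = (vsnd v - vfst v)^2 := rfl
  have hww : wt w = (vsnd w - vfst w)^2 := rfl
  have hXw : (X w : Sring n) = psi n (vfst w) (vsnd w) := by
    rw [eq_pv hcw]; exact (psi_eq (vfst_pos w) hjk hwn).symm
  cases hc : col v with
  | true =>
    have hXv : (X v : Sring n) = psi n (vfst v) (vsnd v) := by
      rw [eq_pv hc]; exact (psi_eq hi1 (vfst_lt_vsnd v) hln).symm
    rw [hsplit]
    refine KK_step _ v w (pv n (vfst v) (vsnd w) hi1 (by omega) (by omega))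
      (pv n (vfst w) (vsnd v) (by omega) (by omega) hln)
      (pv n (vfst v) (vfst w) hi1 hf (by omega))
      (pv n (vsnd w) (vsnd v) (by omega) hs hln) 1 (-1) ?_ ?_ ?_
    · rw [hXv, hXw, ← psi_eq, ← psi_eq, ← psi_eq, ← psi_eq]
      exact relA1 hi1 hf hjk hs hln
    · apply hIH; conv_rhs => rw [hsplit]
      apply meas_lt; left
      rw [wt_pv, wt_pv, hwv, hww]
      exact wt_ineq1 hf hjk hs
    · apply hIH; conv_rhs => rw [hsplit]
      apply meas_lt; left
      rw [wt_pv, wt_pv, hwv, hww]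
      exact wt_ineq2 hf hjk hs
  | false =>
    rcases xi_boundary v hc with hb | hb
    · -- fst v = 1, so vsnd v < n would be needed for rel5; but if vsnd v = n use rel6
      by_cases hn' : vsnd v = n
      · -- v = ξ_{i,n} : use rel6
        have hveq : v = xv n (vfst v) n hi1 (by omega) le_rfl (Or.inr rfl) := by
          apply Subtype.ext
          show v.val = (false, vfst v, n)
          rw [show v.val = (col v, vfst v, vsnd v) from rfl, hc, hn']
        have hXv : (X v : Sring n) = xi n (vfst v) n := by
          rw [hveq]
          exact (xi_eq hi1 (by omega) le_rfl (Or.inr rfl)).symm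
        rw [hn'] at hwv
        rw [hsplit]
        refine KK_step _ v w
          (xv n (vfst w) n (by omega) (by omega) le_rfl (Or.inr rfl))
          (pv n (vfst v) (vsnd w) hi1 (by omega) (by omega))
          (xv n (vsnd w) n (by omega) (by omega) le_rfl (Or.inr rfl))
          (pv n (vfst v) (vfst w) hi1 hf (by omega)) 1 (-1) ?_ ?_ ?_
        · rw [hXv, hXw, ← psi_eq, ← psi_eq, ← xi_eq, ← xi_eq]
          exact relA6 hi1 hf hjk (by omega)
        · apply hIH; conv_rhs => rw [hsplit]
          apply meas_lt; left
          rw [wt_xv, wt_pv, hwv, hww]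
          have := wt_ineq1 (i := vfst v) hf hjk (show vsnd w < n by omega)
          linarith
        · apply hIH; conv_rhs => rw [hsplit]
          apply meas_lt; left
          rw [wt_xv, wt_pv, hwv, hww]
          have := wt_ineq2 (i := vfst v) hf hjk (show vsnd w < n by omega)
          linarith
      · -- v = ξ_{1,l}, l < n : rel5
        have hb1 : vfst v = 1 := hb
        have hXv : (X v : Sring n) = xi n 1 (vsnd v) := by
          rw [eq_xv hc]
          have : v = xv n (vfst v) (vsnd v) (vfst_pos v) (vfst_lt_vsnd v) (vsnd_le v)
              (xi_boundary v hc) := eq_xv hc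
          rw [show xv n (vfst v) (vsnd v) (vfst_pos v) (vfst_lt_vsnd v) (vsnd_le v)
              (xi_boundary v hc) = xv n 1 (vsnd v) le_rfl (by omega) hln (Or.inl rfl) from by
            apply Subtype.ext; simp [xv, hb1]]
          exact (xi_eq (i := 1) le_rfl (by omega) hln (Or.inl rfl)).symm
        rw [hsplit]
        refine KK_step _ v w (xv n 1 (vsnd w) le_rfl (by omega) (by omega) (Or.inl rfl))
          (pv n (vfst w) (vsnd v) (by omega) (by omega) hln)
          (xv n 1 (vfst w) le_rfl (by omega) (by omega) (Or.inl rfl))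
          (pv n (vsnd w) (vsnd v) (by omega) hs hln) 1 (-1) ?_ ?_ ?_
        · rw [hXv, hXw, ← psi_eq, ← psi_eq, ← xi_eq, ← xi_eq]
          exact relA5 (by omega) hjk hs (by omega)
        · apply hIH; conv_rhs => rw [hsplit]
          apply meas_lt; left
          rw [wt_xv, wt_pv, hwv, hww, hb1]
          have := wt_ineq1 (i := 1) (by omega) hjk hs
          linarith
        · apply hIH; conv_rhs => rw [hsplit]
          apply meas_lt; left
          rw [wt_xv, wt_pv, hwv, hww, hb1]
          have := wt_ineq2 (i := 1) (by omega) hjk hs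
          linarith
    · -- v = ξ_{i,n} : use rel6 (outer)
      have hveq : v = xv n (vfst v) n hi1 (by omega) le_rfl (Or.inr rfl) := by
        apply Subtype.ext
        show v.val = (false, vfst v, n)
        rw [show v.val = (col v, vfst v, vsnd v) from rfl, hc, hb]
      have hXv : (X v : Sring n) = xi n (vfst v) n := by
        rw [hveq]
        exact (xi_eq hi1 (by omega) le_rfl (Or.inr rfl)).symm
      rw [hb] at hwv
      rw [hsplit]
      refine KK_step _ v w
        (xv n (vfst w) n (by omega) (by omega) le_rfl (Or.inr rfl))
        (pv n (vfst v) (vsnd w) hi1 (by omega) (by omega))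
        (xv n (vsnd w) n (by omega) (by omega) le_rfl (Or.inr rfl))
        (pv n (vfst v) (vfst w) hi1 hf (by omega)) 1 (-1) ?_ ?_ ?_
      · rw [hXv, hXw, ← psi_eq, ← psi_eq, ← xi_eq, ← xi_eq]
        exact relA6 hi1 hf hjk (by omega)
      · apply hIH; conv_rhs => rw [hsplit]
        apply meas_lt; left
        rw [wt_xv, wt_pv, hwv, hww]
        have := wt_ineq1 (i := vfst v) hf hjk (show vsnd w < n by omega)
        linarith
      · apply hIH; conv_rhs => rw [hsplit]
        apply meas_lt; left
        rw [wt_xv, wt_pv, hwv, hww]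
        have := wt_ineq2 (i := vfst v) hf hjk (show vsnd w < n by omega)
        linarith

lemma case_color (μ : SM n)
    (hIH : ∀ ν : SM n, meas n ν < meas n μ → (monomial ν (1:ℂ) : Sring n) ∈ KK n)
    (v w : SVar n) (hv : v ∈ μ.support) (hw : w ∈ μ.support)
    (hcv : col v = true) (hcw : col w = false) (hbd : vfst v = 1 ∨ vsnd v = n)
    (h1 : vfst v ≤ vfst w) (h2 : vsnd v ≤ vsnd w)
    (h3 : ¬(vfst v = vfst w ∧ vsnd v = vsnd w)) :
    (monomial μ (1:ℂ) : Sring n) ∈ KK n := by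
  have hvw : v ≠ w := fun h => by rw [h] at hcv; rw [hcv] at hcw; exact Bool.noConfusion hcw
  have hμv : 1 ≤ μ v := Nat.pos_of_ne_zero (Finsupp.mem_support_iff.mp hv)
  have hμw : 1 ≤ μ w := Nat.pos_of_ne_zero (Finsupp.mem_support_iff.mp hw)
  have hvv : vfst v < vsnd v := vfst_lt_vsnd v
  have hwv2 : vfst w < vsnd w := vfst_lt_vsnd w
  have hi1 : 1 ≤ vfst v := vfst_pos v
  have hk1 : 1 ≤ vfst w := vfst_pos w
  have hln : vsnd v ≤ n := vsnd_le v
  have hwn : vsnd w ≤ n := vsnd_le w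
  have hbw := xi_boundary w hcw
  have hsplit := mono_split μ v w hvw hμv hμw
  have hwv : wt v = (vsnd v - vfst v)^2 := rfl
  have hww : wt w = (vsnd w - vfst w)^2 := rfl
  have hcwv : cwt v = 0 := by rw [cwt, hcv]; rfl
  have hcww : cwt w = vfst w + vsnd w := by rw [cwt, hcw]; rfl
  by_cases hw1 : vfst w = 1
  · -- both pairs of the form (1, _): rel B4
    have hv1 : vfst v = 1 := by omega
    have hsv : vsnd v < vsnd w := by omega
    have hveq : v = pv n 1 (vsnd v) le_rfl (by omega) hln := by
      apply Subtype.ext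
      show v.val = (true, 1, vsnd v)
      rw [show v.val = (col v, vfst v, vsnd v) from rfl, hcv, hv1]
    have hweq : w = xv n 1 (vsnd w) le_rfl (by omega) hwn (Or.inl rfl) := by
      apply Subtype.ext
      show w.val = (false, 1, vsnd w)
      rw [show w.val = (col w, vfst w, vsnd w) from rfl, hcw, hw1]
    have hXv : (X v : Sring n) = psi n 1 (vsnd v) := by
      rw [hveq]; exact (psi_eq le_rfl (by omega) hln).symm
    have hXw : (X w : Sring n) = xi n 1 (vsnd w) := by
      rw [hweq]; exact (xi_eq le_rfl (by omega) hwn (Or.inl rfl)).symm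
    rw [hsplit]
    refine KK_step _ v w (pv n 1 (vsnd w) le_rfl (by omega) hwn)
      (xv n 1 (vsnd v) le_rfl (by omega) hln (Or.inl rfl))
      (pv n 1 (vsnd w) le_rfl (by omega) hwn)
      (xv n 1 (vsnd v) le_rfl (by omega) hln (Or.inl rfl)) 1 0 ?_ ?_ ?_
    · rw [hXv, hXw, ← psi_eq, ← xi_eq]
      exact relB4 (by omega) hsv hwn
    all_goals (apply hIH; conv_rhs => rw [hsplit])
    all_goals (
      apply meas_lt; right
      constructor
      · rw [wt_pv, wt_xv, hwv, hww, hv1, hw1]; ring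
      · rw [cwt_pv, cwt_xv, hcwv, hcww, hw1]; omega)
  · -- vfst w ≥ 2, so vsnd w = n
    have hwn' : vsnd w = n := by rcases hbw with h | h; omega; exact h
    have hweq : w = xv n (vfst w) n hk1 (by omega) le_rfl (Or.inr rfl) := by
      apply Subtype.ext
      show w.val = (false, vfst w, n)
      rw [show w.val = (col w, vfst w, vsnd w) from rfl, hcw, hwn']
    have hXw : (X w : Sring n) = xi n (vfst w) n := by
      rw [hweq]; exact (xi_eq hk1 (by omega) le_rfl (Or.inr rfl)).symm
    rw [hwn'] at hww
    by_cases hvn : vsnd v = n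
    · -- v = ψ_{i,n}, w = ξ_{j,n} : rel B2
      have hveq : v = pv n (vfst v) n hi1 (by omega) le_rfl := by
        apply Subtype.ext
        show v.val = (true, vfst v, n)
        rw [show v.val = (col v, vfst v, vsnd v) from rfl, hcv, hvn]
      have hXv : (X v : Sring n) = psi n (vfst v) n := by
        rw [hveq]; exact (psi_eq hi1 (by omega) le_rfl).symm
      have hfvw : vfst v < vfst w := by omega
      rw [hvn] at hwv
      rw [hsplit]
      refine KK_step _ v w (pv n (vfst w) n hk1 (by omega) le_rfl)
        (xv n (vfst v) n hi1 (by omega) le_rfl (Or.inr rfl))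
        (pv n (vfst w) n hk1 (by omega) le_rfl)
        (xv n (vfst v) n hi1 (by omega) le_rfl (Or.inr rfl)) 1 0 ?_ ?_ ?_
      · rw [hXv, hXw, ← psi_eq, ← xi_eq]
        exact relB2 hi1 hfvw (by omega)
      all_goals (apply hIH; conv_rhs => rw [hsplit])
      all_goals (
        apply meas_lt; right
        constructor
        · rw [wt_pv, wt_xv, hwv, hww]; ring
        · rw [cwt_pv, cwt_xv, hcwv, hcww, hwn']; omega)
    · -- v = ψ_{1,j} with j < n, w = ξ_{k,n} : rel B3
      have hv1 : vfst v = 1 := by rcases hbd with h | h; exact h; omega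
      have hveq : v = pv n 1 (vsnd v) le_rfl (by omega) hln := by
        apply Subtype.ext
        show v.val = (true, 1, vsnd v)
        rw [show v.val = (col v, vfst v, vsnd v) from rfl, hcv, hv1]
      have hXv : (X v : Sring n) = psi n 1 (vsnd v) := by
        rw [hveq]; exact (psi_eq le_rfl (by omega) hln).symm
      rw [hsplit]
      refine KK_step _ v w (pv n (vfst w) n hk1 (by omega) le_rfl)
        (xv n 1 (vsnd v) le_rfl (by omega) hln (Or.inl rfl))
        (pv n (vfst w) n hk1 (by omega) le_rfl)
        (xv n 1 (vsnd v) le_rfl (by omega) hln (Or.inl rfl)) 1 0 ?_ ?_ ?_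
      · rw [hXv, hXw, ← psi_eq, ← xi_eq]
        exact relB3 (by omega) (by omega) (by omega) (by omega)
      all_goals (apply hIH; conv_rhs => rw [hsplit])
      all_goals (
        apply meas_lt; right
        constructor
        · rw [wt_pv, wt_xv, hwv, hww, hv1]; ring
        · rw [cwt_pv, cwt_xv, hcwv, hcww, hwn']; omega)

/-- every monomial lies in the ideal plus the span of standard monomials -/
lemma mono_mem (μ : SM n) : (monomial μ (1:ℂ) : Sring n) ∈ KK n := by
  suffices H : ∀ N (μ : SM n), meas n μ ≤ N → (monomial μ (1:ℂ) : Sring n) ∈ KK n from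
    H (meas n μ) μ le_rfl
  intro N
  induction N using Nat.strongRecOn with
  | ind N IHN =>
    intro μ hm
    by_cases hstd : Std μ
    · exact Submodule.mem_sup_right (Submodule.subset_span ⟨μ, hstd, rfl⟩)
    · have hIH : ∀ ν : SM n, meas n ν < meas n μ → (monomial ν (1:ℂ) : Sring n) ∈ KK n := by
        intro ν hν
        rcases N with _ | N'
        · omega
        · exact IHN (meas n ν) (by omega) ν le_rfl
      rw [Std] at hstd
      push_neg at hstd
      obtain ⟨v, hv, w, hw, hbad⟩ := hstd
      by_cases hA : (vfst v ≤ vfst w ∧ vsnd v ≤ vsnd w) ∨ (vfst w ≤ vfst v ∧ vsnd w ≤ vsnd v)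
      · obtain ⟨hcv, hcw, hbd, h1, h2, h3⟩ := hbad hA
        exact case_color μ hIH v w hv hw hcv hcw hbd h1 h2 (by tauto)
      · push_neg at hA
        have : (vfst v < vfst w ∧ vsnd w < vsnd v) ∨ (vfst w < vfst v ∧ vsnd v < vsnd w) := by
          omega
        rcases this with ⟨ha, hb⟩ | ⟨ha, hb⟩
        · exact case_incomp μ hIH v w hv hw ha hb
        · exact case_incomp μ hIH w v hw hv ha hb

-- ================= leading monomial machinery =================

/-- rank of the variables of `R`, used for the term order -/
def rk : RVar → ℕ
  | .s => 0
  | .t => 1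
  | .x1 i => 2*i+2
  | .x2 i => 2*i+3

lemma rk_inj : Function.Injective rk := by
  intro a b h
  cases a <;> cases b <;> simp [rk] at h ⊢ <;> omega

noncomputable instance : LinearOrder RVar := LinearOrder.lift' rk rk_inj

lemma rvar_lt_iff {a b : RVar} : a < b ↔ rk a < rk b := by
  constructor
  · intro h
    exact lt_of_le_not_ge (le_of_lt h : rk a ≤ rk b) (not_le_of_gt h : ¬ rk b ≤ rk a)
  · intro h
    exact lt_of_le_not_ge (le_of_lt h : a ≤ b) (not_le_of_gt h : ¬ b ≤ a)

/-- `p` has dominant monomial `α` with coefficient 1 -/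
def Dom (p : Rring) (α : RVar →₀ ℕ) : Prop :=
  coeff α p = 1 ∧ ∀ β ∈ p.support, β ≠ α → toLex β < toLex α

lemma Dom_monomial (α : RVar →₀ ℕ) : Dom (monomial α (1:ℂ)) α := by
  constructor
  · simp [coeff_monomial]
  · intro β hβ hne
    rw [support_monomial, if_neg one_ne_zero] at hβ
    exact absurd (Finset.mem_singleton.mp hβ) hne

lemma Dom_one : Dom (1 : Rring) 0 := by
  have := Dom_monomial (0 : RVar →₀ ℕ)
  rwa [monomial_zero'] at this
  -- monomial 0 1 = C 1 = 1

lemma Dom_mul {p q : Rring} {α β : RVar →₀ ℕ} (hp : Dom p α) (hq : Dom q β) :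
    Dom (p * q) (α + β) := by
  classical
  have key : ∀ γ ∈ p.support, ∀ δ ∈ q.support, (γ, δ) ≠ (α, β) →
      toLex (γ + δ) < toLex (α + β) := by
    intro γ hγ δ hδ hne
    have hγ' : γ = α ∨ toLex γ < toLex α := by
      by_cases h : γ = α
      · exact Or.inl h
      · exact Or.inr (hp.2 γ hγ h)
    have hδ' : δ = β ∨ toLex δ < toLex β := by
      by_cases h : δ = β
      · exact Or.inl h
      · exact Or.inr (hq.2 δ hδ h)
    rw [toLex_add, toLex_add]
    rcases hγ' with rfl | hlt
    · rcases hδ' with rfl | hlt'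
      · exact absurd rfl hne
      · exact add_lt_add_right hlt' _
    · rcases hδ' with rfl | hlt'
      · exact add_lt_add_left hlt _
      · exact add_lt_add hlt hlt'
  constructor
  · rw [coeff_mul]
    rw [Finset.sum_eq_single (α, β)]
    · rw [hp.1, hq.1, one_mul]
    · intro b hb hne
      rcases b with ⟨γ, δ⟩
      by_cases hγ : γ ∈ p.support
      · by_cases hδ : δ ∈ q.support
        · have := key γ hγ δ hδ hne
          rw [Finset.HasAntidiagonal.mem_antidiagonal.mp hb] at this
          exact absurd this (lt_irrefl _)
        · rw [MvPolynomial.notMem_support_iff.mp hδ, mul_zero]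
      · rw [MvPolynomial.notMem_support_iff.mp hγ, zero_mul]
    · intro h
      exfalso
      exact h (Finset.HasAntidiagonal.mem_antidiagonal.mpr rfl)
  · intro β' hβ' hne
    have := MvPolynomial.support_mul p q hβ'
    rw [Finset.mem_add] at this
    obtain ⟨γ, hγ, δ, hδ, rfl⟩ := this
    refine key γ hγ δ hδ ?_
    intro hc
    rw [Prod.mk.injEq] at hc
    rw [hc.1, hc.2] at hne
    exact hne rfl

lemma Dom_pow {p : Rring} {α : RVar →₀ ℕ} (hp : Dom p α) (k : ℕ) :
    Dom (p ^ k) (k • α) := by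
  induction k with
  | zero => simpa using Dom_one
  | succ m ih =>
    rw [pow_succ, succ_nsmul]
    exact Dom_mul ih hp

lemma Dom_prod {ι : Type*} (s : Finset ι) (f : ι → Rring) (g : ι → RVar →₀ ℕ)
    (h : ∀ i ∈ s, Dom (f i) (g i)) :
    Dom (∏ i ∈ s, f i) (∑ i ∈ s, g i) := by
  classical
  induction s using Finset.induction_on with
  | empty => simpa using Dom_one
  | insert a s' hni ih =>
    rw [Finset.prod_insert hni, Finset.sum_insert hni]
    exact Dom_mul (h a (Finset.mem_insert_self a s'))
      (ih fun i hi => h i (Finset.mem_insert_of_mem hi))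

/-- predicted leading exponent of `φ` applied to a variable -/
noncomputable def lv (v : SVar n) : RVar →₀ ℕ :=
  Finsupp.single (if col v then RVar.t else RVar.s) 1
    + (if vfst v = 1 then 0 else Finsupp.single (RVar.x1 (vfst v)) 1)
    + (if vsnd v = n then 0 else Finsupp.single (RVar.x2 (vsnd v)) 1)

/-- predicted leading exponent of `φ` applied to a monomial -/
noncomputable def Lm (μ : SM n) : RVar →₀ ℕ := μ.sum fun v k => k • lv v

lemma Dom_X_var (r : RVar) : Dom (X r) (Finsupp.single r 1) :=
  Dom_monomial (Finsupp.single r 1)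

lemma Dom_binom {i j : ℕ} (hij : i < j) :
    Dom (X (RVar.x1 i) * X (RVar.x2 j) - X (RVar.x1 j) * X (RVar.x2 i) : Rring)
      (Finsupp.single (RVar.x1 i) 1 + Finsupp.single (RVar.x2 j) 1) := by
  classical
  set γ1 : RVar →₀ ℕ := Finsupp.single (RVar.x1 i) 1 + Finsupp.single (RVar.x2 j) 1 with hγ1
  set γ2 : RVar →₀ ℕ := Finsupp.single (RVar.x1 j) 1 + Finsupp.single (RVar.x2 i) 1 with hγ2
  have a1 : Finsupp.single (RVar.x1 j) (1:ℕ) (RVar.x1 i) = 0 :=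
    Finsupp.single_eq_of_ne (by simp; omega)
  have a2 : Finsupp.single (RVar.x2 i) (1:ℕ) (RVar.x1 i) = 0 :=
    Finsupp.single_eq_of_ne (by simp)
  have a3 : Finsupp.single (RVar.x1 i) (1:ℕ) (RVar.x1 i) = 1 := Finsupp.single_eq_same
  have a4 : Finsupp.single (RVar.x2 j) (1:ℕ) (RVar.x1 i) = 0 :=
    Finsupp.single_eq_of_ne (by simp)
  have hval2 : γ2 (RVar.x1 i) = 0 := by rw [hγ2, Finsupp.add_apply, a1, a2]
  have hval1 : γ1 (RVar.x1 i) = 1 := by rw [hγ1, Finsupp.add_apply, a3, a4]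
  have hne : γ2 ≠ γ1 := by
    intro h
    have : (0:ℕ) = 1 := by rw [← hval2, h, hval1]
    exact absurd this (by norm_num)
  have e1 : (X (RVar.x1 i) * X (RVar.x2 j) : Rring) = monomial γ1 1 := by
    rw [X, X, monomial_mul, one_mul]
  have e2 : (X (RVar.x1 j) * X (RVar.x2 i) : Rring) = monomial γ2 1 := by
    rw [X, X, monomial_mul, one_mul]
  constructor
  · rw [e1, e2, coeff_sub, coeff_monomial, if_pos rfl, coeff_monomial, if_neg hne]
    norm_num
  · intro β hβ hne'
    rw [e1, e2] at hβ
    have hsub := MvPolynomial.support_sub (σ := RVar) (R := ℂ) _ _ hβ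
    rw [support_monomial, support_monomial, if_neg one_ne_zero, if_neg one_ne_zero] at hsub
    have : β = γ1 ∨ β = γ2 := by
      rcases Finset.mem_union.mp hsub with h | h
      · exact Or.inl (Finset.mem_singleton.mp h)
      · exact Or.inr (Finset.mem_singleton.mp h)
    rcases this with rfl | rfl
    · exact absurd rfl hne'
    · refine Finsupp.Lex.lt_iff.mpr ⟨RVar.x1 i, ?_, ?_⟩
      · intro r hr
        rw [rvar_lt_iff] at hr
        show γ2 r = γ1 r
        cases r with
        | s => simp [hγ1, hγ2, Finsupp.single_apply]
        | t => simp [hγ1, hγ2, Finsupp.single_apply]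
        | x1 m =>
          have hmi : i ≠ m := by simp [rk] at hr; omega
          have hmj : j ≠ m := by simp [rk] at hr; omega
          simp [hγ1, hγ2, Finsupp.single_apply, hmi, hmj]
        | x2 m =>
          have hmi : i ≠ m := by simp [rk] at hr; omega
          have hmj : j ≠ m := by simp [rk] at hr; omega
          simp [hγ1, hγ2, Finsupp.single_apply, hmi, hmj]
      · show γ2 (RVar.x1 i) < γ1 (RVar.x1 i)
        rw [hval1, hval2]
        norm_num

lemma Dom_phi_X (v : SVar n) : Dom (phi n (X v)) (lv v) := by
  classical
  have hD : Dom ((if col v = true then X RVar.t else X RVar.s : Rring))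
      (Finsupp.single (if col v then RVar.t else RVar.s) 1) := by
    cases hc : col v
    · simpa [hc] using Dom_X_var RVar.s
    · simpa [hc] using Dom_X_var RVar.t
  rw [phi_X, lv]
  by_cases h1 : vfst v = 1 <;> by_cases h2 : vsnd v = n
  · rw [h1, h2, minor_1n, mul_one]
    simpa using hD
  · rw [h1, minor_left h2]
    simpa [h2] using Dom_mul hD (Dom_X_var (RVar.x2 (vsnd v)))
  · rw [h2, minor_right h1]
    simpa [h1] using Dom_mul hD (Dom_X_var (RVar.x1 (vfst v)))
  · rw [minor_mid h1 h2]
    simpa [h1, h2, add_assoc] using Dom_mul hD (Dom_binom (vfst_lt_vsnd v))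

lemma Dom_phi_monomial (μ : SM n) : Dom (phi n (monomial μ (1:ℂ))) (Lm μ) := by
  have e : (monomial μ (1:ℂ) : Sring n) = ∏ v ∈ μ.support, X v ^ μ v :=
    (prod_X_pow_eq_monomial).symm
  rw [e, map_prod, Lm]
  apply Dom_prod
  intro v hv
  rw [map_pow]
  exact Dom_pow (Dom_phi_X v) (μ v)


-- ============ combinatorics for injectivity ============

lemma Lm_add (μ ν : SM n) : Lm (μ + ν) = Lm μ + Lm ν :=
  Finsupp.sum_add_index' (fun _ => zero_smul _ _) (fun a b c => add_smul b c _)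

lemma Lm_single (v : SVar n) (k : ℕ) : Lm (single v k) = k • lv v := by
  rw [Lm]; exact Finsupp.sum_single_index (zero_smul _ _)

/-- push an additive functional through `Lm` -/
lemma Lm_hom (F : (RVar →₀ ℕ) → ℕ) (hF0 : F 0 = 0)
    (hFadd : ∀ a b, F (a + b) = F a + F b)
    (hFsmul : ∀ (k : ℕ) a, F (k • a) = k * F a) (μ : SM n) :
    F (Lm μ) = μ.sum fun v k => k * F (lv v) := by
  induction μ using Finsupp.induction with
  | zero => simp [Lm, hF0]
  | single_add v k f hvf hk ih =>
    rw [Lm_add, hFadd, Lm_single, hFsmul,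
      Finsupp.sum_add_index' (fun a => zero_mul (F (lv a))) (fun a b c => add_mul b c (F (lv a))),
      Finsupp.sum_single_index (zero_mul (F (lv v))), ih]

lemma lv_t (v : SVar n) : lv v RVar.t = if col v then 1 else 0 := by
  rw [lv, Finsupp.add_apply, Finsupp.add_apply]
  cases hc : col v <;> by_cases h1 : vfst v = 1 <;> by_cases h2 : vsnd v = n <;>
    simp [h1, h2, Finsupp.single_apply]

lemma lv_s (v : SVar n) : lv v RVar.s = if col v then 0 else 1 := by
  rw [lv, Finsupp.add_apply, Finsupp.add_apply]
  cases hc : col v <;> by_cases h1 : vfst v = 1 <;> by_cases h2 : vsnd v = n <;>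
    simp [h1, h2, Finsupp.single_apply]

lemma lv_x1 (v : SVar n) (a : ℕ) (ha : a ≠ 1) :
    lv v (RVar.x1 a) = if vfst v = a then 1 else 0 := by
  rw [lv, Finsupp.add_apply, Finsupp.add_apply]
  cases hc : col v <;> by_cases h1 : vfst v = 1 <;> by_cases h2 : vsnd v = n <;>
    by_cases h3 : vfst v = a <;>
    simp [hc, h1, h2, h3, ha, Ne.symm ha, Finsupp.single_apply] <;> omega

lemma lv_x2 (v : SVar n) (b : ℕ) (hb : b ≠ n) :
    lv v (RVar.x2 b) = if vsnd v = b then 1 else 0 := by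
  rw [lv, Finsupp.add_apply, Finsupp.add_apply]
  cases hc : col v <;> by_cases h1 : vfst v = 1 <;> by_cases h2 : vsnd v = n <;>
    by_cases h3 : vsnd v = b <;>
    simp [hc, h1, h2, h3, hb, Ne.symm hb, Finsupp.single_apply] <;> omega

def isX1 : RVar → Bool
  | .x1 _ => true
  | _ => false

def isX2 : RVar → Bool
  | .x2 _ => true
  | _ => false

/-- total degree in a set of variables -/
def TT (P : RVar → Bool) (γ : RVar →₀ ℕ) : ℕ := γ.sum fun r k => if P r then k else 0

lemma TT_zero (P : RVar → Bool) : TT P 0 = 0 := by simp [TT]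

lemma TT_add (P : RVar → Bool) (a b : RVar →₀ ℕ) : TT P (a + b) = TT P a + TT P b :=
  Finsupp.sum_add_index' (fun _ => by simp) (fun r c d => by split <;> simp)

lemma TT_smul (P : RVar → Bool) (k : ℕ) (a : RVar →₀ ℕ) : TT P (k • a) = k * TT P a := by
  rw [TT, Finsupp.sum_smul_index' (fun i => by simp), TT, Finsupp.mul_sum]
  apply Finsupp.sum_congr
  intro r _
  split <;> simp

lemma TT_single (P : RVar → Bool) (r : RVar) (k : ℕ) :
    TT P (Finsupp.single r k) = if P r then k else 0 := by
  rw [TT, Finsupp.sum_single_index]; simp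

lemma TT1_lv (v : SVar n) : TT isX1 (lv v) = if vfst v = 1 then 0 else 1 := by
  rw [lv, TT_add, TT_add, TT_single]
  by_cases h1 : vfst v = 1 <;> by_cases h2 : vsnd v = n <;>
    cases hc : col v <;>
    simp [h1, h2, TT_zero, TT_single, isX1]

lemma TT2_lv (v : SVar n) : TT isX2 (lv v) = if vsnd v = n then 0 else 1 := by
  rw [lv, TT_add, TT_add, TT_single]
  by_cases h1 : vfst v = 1 <;> by_cases h2 : vsnd v = n <;>
    cases hc : col v <;>
    simp [h1, h2, TT_zero, TT_single, isX2]

/-- count of elements in the image multiset -/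
lemma cnt_map {β : Type*} [DecidableEq β] (μ : SM n) (g : SVar n → β) (a : β) :
    (μ.toMultiset.map g).count a = μ.sum fun v k => if g v = a then k else 0 := by
  induction μ using Finsupp.induction with
  | zero => simp
  | single_add v k f hvf hk ih =>
    rw [Finsupp.toMultiset_add, Multiset.map_add, Multiset.count_add, ih,
      Finsupp.toMultiset_single, Finsupp.sum_add_index' (fun _ => by simp)
        (fun r c d => by split <;> simp), Finsupp.sum_single_index (by simp)]
    congr 1
    rw [Multiset.map_nsmul, Multiset.map_singleton, Multiset.count_nsmul,
      Multiset.count_singleton]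
    split <;> rename_i hcase
    · rw [if_pos hcase.symm, mul_one]
    · rw [if_neg (fun hh => hcase hh.symm), mul_zero]

/-- a chain (in the product order) of pairs is determined by its two coordinate multisets -/
lemma chain_multiset_eq (C : Multiset (ℕ × ℕ)) :
    ∀ D : Multiset (ℕ × ℕ),
    (∀ p ∈ C, ∀ q ∈ C, (p.1 ≤ q.1 ∧ p.2 ≤ q.2) ∨ (q.1 ≤ p.1 ∧ q.2 ≤ p.2)) →
    (∀ p ∈ D, ∀ q ∈ D, (p.1 ≤ q.1 ∧ p.2 ≤ q.2) ∨ (q.1 ≤ p.1 ∧ q.2 ≤ p.2)) →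
    C.map Prod.fst = D.map Prod.fst → C.map Prod.snd = D.map Prod.snd → C = D := by
  induction C using Multiset.strongInductionOn with
  | ih C IH =>
    intro D hC hD h1 h2
    rcases Multiset.empty_or_exists_mem C with rfl | ⟨p0, hp0⟩
    · rw [Multiset.map_zero] at h1
      have : D.map Prod.fst = 0 := h1.symm
      rw [Multiset.map_eq_zero] at this
      rw [this]
    · have hCne : C.toFinset.Nonempty := ⟨p0, Multiset.mem_toFinset.mpr hp0⟩
      obtain ⟨p, hpF, hpmax⟩ := Finset.exists_max_image C.toFinset (fun q => q.1 + q.2) hCne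
      have hp : p ∈ C := Multiset.mem_toFinset.mp hpF
      have hdomC : ∀ q ∈ C, q.1 ≤ p.1 ∧ q.2 ≤ p.2 := by
        intro q hq
        have := hpmax q (Multiset.mem_toFinset.mpr hq)
        rcases hC q hq p hp with h | h <;> omega
      have hDne : D.toFinset.Nonempty := by
        rcases Multiset.empty_or_exists_mem D with rfl | ⟨q0, hq0⟩
        · rw [Multiset.map_zero, Multiset.map_eq_zero] at h1
          rw [h1] at hp; exact absurd hp (Multiset.notMem_zero p)
        · exact ⟨q0, Multiset.mem_toFinset.mpr hq0⟩
      obtain ⟨r, hrF, hrmax⟩ := Finset.exists_max_image D.toFinset (fun q => q.1 + q.2) hDne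
      have hr : r ∈ D := Multiset.mem_toFinset.mp hrF
      have hdomD : ∀ q ∈ D, q.1 ≤ r.1 ∧ q.2 ≤ r.2 := by
        intro q hq
        have := hrmax q (Multiset.mem_toFinset.mpr hq)
        rcases hD q hq r hr with h | h <;> omega
      have hrp : r = p := by
        have e1 : p.1 ∈ D.map Prod.fst := by
          rw [← h1]; exact Multiset.mem_map_of_mem _ hp
        obtain ⟨q, hq, hqe⟩ := Multiset.mem_map.mp e1
        have e1' : r.1 ∈ C.map Prod.fst := by
          rw [h1]; exact Multiset.mem_map_of_mem _ hr
        obtain ⟨q', hq', hqe'⟩ := Multiset.mem_map.mp e1'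
        have e2 : p.2 ∈ D.map Prod.snd := by
          rw [← h2]; exact Multiset.mem_map_of_mem _ hp
        obtain ⟨w, hw, hwe⟩ := Multiset.mem_map.mp e2
        have e2' : r.2 ∈ C.map Prod.snd := by
          rw [h2]; exact Multiset.mem_map_of_mem _ hr
        obtain ⟨w', hw', hwe'⟩ := Multiset.mem_map.mp e2'
        have f1 := hdomD q hq
        have f2 := hdomC q' hq'
        have f3 := hdomD w hw
        have f4 := hdomC w' hw'
        have : r.1 = p.1 ∧ r.2 = p.2 := by omega
        exact Prod.ext this.1 this.2
      subst hrp
      have key : C.erase r = D.erase r := by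
        apply IH (C.erase r) (Multiset.erase_lt.mpr hp)
        · intro a ha b hb
          exact hC a (Multiset.mem_of_mem_erase ha) b (Multiset.mem_of_mem_erase hb)
        · intro a ha b hb
          exact hD a (Multiset.mem_of_mem_erase ha) b (Multiset.mem_of_mem_erase hb)
        · have eC := Multiset.cons_erase hp
          have eD := Multiset.cons_erase hr
          have : (r ::ₘ C.erase r).map Prod.fst = (r ::ₘ D.erase r).map Prod.fst := by
            rw [eC, eD]; exact h1
          rwa [Multiset.map_cons, Multiset.map_cons, Multiset.cons_inj_right] at this
        · have eC := Multiset.cons_erase hp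
          have eD := Multiset.cons_erase hr
          have : (r ::ₘ C.erase r).map Prod.snd = (r ::ₘ D.erase r).map Prod.snd := by
            rw [eC, eD]; exact h2
          rwa [Multiset.map_cons, Multiset.map_cons, Multiset.cons_inj_right] at this
      calc C = r ::ₘ C.erase r := (Multiset.cons_erase hp).symm
        _ = r ::ₘ D.erase r := by rw [key]
        _ = D := Multiset.cons_erase hr

-- ============ counting decompositions ============

lemma sum_split (μ : SM n) (g1 g2 : SVar n → ℕ → ℕ) :
    (μ.sum fun v k => g1 v k + g2 v k) = μ.sum g1 + μ.sum g2 := by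
  classical
  simp [Finsupp.sum, Finset.sum_add_distrib]

lemma val_eq (v : SVar n) : v.val = (col v, vfst v, vsnd v) := rfl

/-- count of a boundary pair, written with a ξ-variable carrying the pair -/
lemma cnt2_f (ρ : SM n) (v0 : SVar n) (hc0 : col v0 = false) :
    (ρ.sum fun v k => if (vfst v, vsnd v) = (vfst v0, vsnd v0) then k else 0)
      = ρ (pv n (vfst v0) (vsnd v0) (vfst_pos v0) (vfst_lt_vsnd v0) (vsnd_le v0)) + ρ v0 := by
  classical
  set a := pv n (vfst v0) (vsnd v0) (vfst_pos v0) (vfst_lt_vsnd v0) (vsnd_le v0) with ha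
  have key : (fun (v : SVar n) (k : ℕ) => if (vfst v, vsnd v) = (vfst v0, vsnd v0) then k else 0)
      = fun v k => (if v = a then k else 0) + (if v = v0 then k else 0) := by
    funext v k
    by_cases hv : (vfst v, vsnd v) = (vfst v0, vsnd v0)
    · rw [if_pos hv]
      have hvi : vfst v = vfst v0 := congrArg Prod.fst hv
      have hvj : vsnd v = vsnd v0 := congrArg Prod.snd hv
      cases hcv : col v
      · rw [if_neg, if_pos, zero_add]
        · apply Subtype.ext
          rw [val_eq, val_eq, hcv, hc0, hvi, hvj]
        · intro hh
          rw [hh] at hcv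
          exact Bool.noConfusion hcv
      · rw [if_pos, if_neg, add_zero]
        · intro hh
          rw [hh] at hcv
          have : col v0 = true := hcv
          rw [hc0] at this; exact Bool.noConfusion this
        · apply Subtype.ext
          rw [val_eq, val_eq, hcv, hvi, hvj]; rfl
    · rw [if_neg hv, if_neg, if_neg, add_zero]
      · intro hh; rw [hh] at hv; exact hv rfl
      · intro hh; rw [hh] at hv; exact hv rfl
  rw [key, sum_split, Finsupp.sum_ite_self_eq', Finsupp.sum_ite_self_eq']

/-- count of a boundary pair, written with a ψ-variable carrying the pair -/
lemma cnt2_t (ρ : SM n) (v0 : SVar n) (hc0 : col v0 = true)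
    (hb : vfst v0 = 1 ∨ vsnd v0 = n) :
    (ρ.sum fun v k => if (vfst v, vsnd v) = (vfst v0, vsnd v0) then k else 0)
      = ρ v0 + ρ (xv n (vfst v0) (vsnd v0) (vfst_pos v0) (vfst_lt_vsnd v0) (vsnd_le v0) hb) := by
  classical
  set a := xv n (vfst v0) (vsnd v0) (vfst_pos v0) (vfst_lt_vsnd v0) (vsnd_le v0) hb with ha
  have key : (fun (v : SVar n) (k : ℕ) => if (vfst v, vsnd v) = (vfst v0, vsnd v0) then k else 0)
      = fun v k => (if v = v0 then k else 0) + (if v = a then k else 0) := by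
    funext v k
    by_cases hv : (vfst v, vsnd v) = (vfst v0, vsnd v0)
    · rw [if_pos hv]
      have hvi : vfst v = vfst v0 := congrArg Prod.fst hv
      have hvj : vsnd v = vsnd v0 := congrArg Prod.snd hv
      cases hcv : col v
      · rw [if_neg, if_pos, zero_add]
        · apply Subtype.ext
          rw [val_eq, val_eq, hcv, hvi, hvj]; rfl
        · intro hh
          rw [hh] at hcv
          have : col v0 = false := hcv
          rw [hc0] at this; exact Bool.noConfusion this
      · rw [if_pos, if_neg, add_zero]
        · intro hh
          rw [hh] at hcv
          exact Bool.noConfusion hcv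
        · apply Subtype.ext
          rw [val_eq, val_eq, hcv, hc0, hvi, hvj]
    · rw [if_neg hv, if_neg, if_neg, add_zero]
      · intro hh; rw [hh] at hv; exact hv rfl
      · intro hh; rw [hh] at hv; exact hv rfl
  rw [key, sum_split, Finsupp.sum_ite_self_eq', Finsupp.sum_ite_self_eq']

/-- count of a non-boundary pair -/
lemma cnt2_t' (ρ : SM n) (v0 : SVar n) (hb : ¬(vfst v0 = 1 ∨ vsnd v0 = n)) :
    (ρ.sum fun v k => if (vfst v, vsnd v) = (vfst v0, vsnd v0) then k else 0) = ρ v0 := by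
  classical
  have hc0 : col v0 = true := by
    rcases col_or v0 with h | h | h
    · exact h
    · exact absurd (Or.inl h) hb
    · exact absurd (Or.inr h) hb
  have key : (fun (v : SVar n) (k : ℕ) => if (vfst v, vsnd v) = (vfst v0, vsnd v0) then k else 0)
      = fun v k => (if v = v0 then k else 0) := by
    funext v k
    by_cases hv : (vfst v, vsnd v) = (vfst v0, vsnd v0)
    · rw [if_pos hv]
      have hvi : vfst v = vfst v0 := congrArg Prod.fst hv
      have hvj : vsnd v = vsnd v0 := congrArg Prod.snd hv
      cases hcv : col v
      · exfalso
        rcases xi_boundary v hcv with h | h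
        · exact hb (Or.inl (hvi ▸ h))
        · exact hb (Or.inr (hvj ▸ h))
      · rw [if_pos]
        apply Subtype.ext
        rw [val_eq, val_eq, hcv, hc0, hvi, hvj]
    · rw [if_neg hv, if_neg]
      intro hh; rw [hh] at hv; exact hv rfl
  rw [key, Finsupp.sum_ite_self_eq']

/-- the key step: the ξ-components cannot drop anywhere -/
lemma xi_no_drop (μ ν : SM n) (hν : Std ν) (hμ : Std μ)
    (hcnt : ∀ p : ℕ × ℕ, (μ.sum fun v k => if (vfst v, vsnd v) = p then k else 0)
      = (ν.sum fun v k => if (vfst v, vsnd v) = p then k else 0))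
    (hxi : (μ.sum fun v k => if col v then 0 else k)
      = ν.sum fun v k => if col v then 0 else k)
    (v : SVar n) (hcv : col v = false) (hlt : ν v < μ v) : False := by
  classical
  have hexists : ∃ w : SVar n, col w = false ∧ μ w < ν w := by
    by_contra hno
    push_neg at hno
    set s := μ.support ∪ ν.support with hs
    have e1 : (μ.sum fun v k => if col v then 0 else k)
        = ∑ w ∈ s, (if col w then 0 else μ w) :=
      Finsupp.sum_of_support_subset μ Finset.subset_union_left _
        (fun i _ => by split <;> rfl)
    have e2 : (ν.sum fun v k => if col v then 0 else k)
        = ∑ w ∈ s, (if col w then 0 else ν w) :=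
      Finsupp.sum_of_support_subset ν Finset.subset_union_right _
        (fun i _ => by split <;> rfl)
    have hlt2 : (∑ w ∈ s, (if col w then 0 else ν w))
        < ∑ w ∈ s, (if col w then 0 else μ w) := by
      apply Finset.sum_lt_sum
      · intro i _
        split
        · exact le_rfl
        · rename_i hcol
          exact hno i (by rwa [Bool.not_eq_true] at hcol)
      · refine ⟨v, ?_, ?_⟩
        · apply Finset.mem_union_left
          exact Finsupp.mem_support_iff.mpr (by omega)
        · rw [hcv]; simpa using hlt
    rw [e1, e2] at hxi
    omega
  obtain ⟨w, hcw, hwlt⟩ := hexists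
  have hvw : v ≠ w := fun h => by rw [h] at hlt; omega
  have hpair : (vfst v, vsnd v) ≠ (vfst w, vsnd w) := by
    intro h
    apply hvw
    apply Subtype.ext
    rw [val_eq, val_eq, hcv, hcw, h]
  have hbv := xi_boundary v hcv
  have hbw := xi_boundary w hcw
  have hv1 := vfst_lt_vsnd v
  have hv2 := vsnd_le v
  have hw1 := vfst_lt_vsnd w
  have hw2 := vsnd_le w
  have hvp := vfst_pos v
  have hwp := vfst_pos w
  have htri : (vfst v ≤ vfst w ∧ vsnd v ≤ vsnd w) ∨ (vfst w ≤ vfst v ∧ vsnd w ≤ vsnd v) := by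
    have hne : vfst v ≠ vfst w ∨ vsnd v ≠ vsnd w := by
      by_contra hh
      push_neg at hh
      exact hpair (by rw [hh.1, hh.2])
    omega
  rcases htri with ⟨ha, hb2⟩ | ⟨ha, hb2⟩
  · have hwsupp : w ∈ ν.support := Finsupp.mem_support_iff.mpr (by omega)
    have hc2 := hcnt (vfst v, vsnd v)
    rw [cnt2_f μ v hcv, cnt2_f ν v hcv] at hc2
    set u := pv n (vfst v) (vsnd v) (vfst_pos v) (vfst_lt_vsnd v) (vsnd_le v) with hu
    have husupp : u ∈ ν.support := Finsupp.mem_support_iff.mpr (by omega)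
    have hstd := (hν u husupp w hwsupp).2
    apply hstd
    refine ⟨rfl, hcw, ?_, ?_, ?_, ?_⟩
    · exact hbv
    · exact ha
    · exact hb2
    · intro hh
      exact hpair (by rw [show vfst v = vfst w from hh.1, show vsnd v = vsnd w from hh.2])
  · have hvsupp : v ∈ μ.support := Finsupp.mem_support_iff.mpr (by omega)
    have hc2 := hcnt (vfst w, vsnd w)
    rw [cnt2_f μ w hcw, cnt2_f ν w hcw] at hc2
    set u := pv n (vfst w) (vsnd w) (vfst_pos w) (vfst_lt_vsnd w) (vsnd_le w) with hu
    have husupp : u ∈ μ.support := Finsupp.mem_support_iff.mpr (by omega)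
    have hstd := (hμ u husupp v hvsupp).2
    apply hstd
    refine ⟨rfl, hcv, ?_, ?_, ?_, ?_⟩
    · exact hbw
    · exact ha
    · exact hb2
    · intro hh
      apply hpair
      rw [show vfst w = vfst v from hh.1, show vsnd w = vsnd v from hh.2]
/-- injectivity of the leading exponent on standard monomials -/
lemma Lm_inj (hn : 4 ≤ n) (μ ν : SM n) (hμ : Std μ) (hν : Std ν) (h : Lm μ = Lm ν) :
    μ = ν := by
  classical
  have hev : ∀ (ρ : SM n) r, Lm ρ r = ρ.sum fun v k => k * lv v r := fun ρ r =>
    Lm_hom (fun γ => γ r) rfl (fun a b => Finsupp.add_apply a b r)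
      (fun k a => by
        show (k • a) r = k * a r
        rw [Finsupp.smul_apply, smul_eq_mul]) ρ
  -- the ξ-degree is determined
  have exi : ∀ ρ : SM n, Lm ρ RVar.s = ρ.sum fun v k => if col v then 0 else k := by
    intro ρ
    rw [hev]
    apply Finsupp.sum_congr
    intro v _
    rw [lv_s]
    cases hc : col v <;> simp [hc]
  have hxi : (μ.sum fun v k => if col v then 0 else k)
      = ν.sum fun v k => if col v then 0 else k := by
    rw [← exi, ← exi, h]
  -- first coordinates are determined
  have efst : ∀ (ρ : SM n) (a : ℕ), a ≠ 1 →
      (ρ.sum fun v k => if vfst v = a then k else 0) = Lm ρ (RVar.x1 a) := by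
    intro ρ a ha
    rw [hev]
    apply Finsupp.sum_congr
    intro v _
    rw [lv_x1 v a ha]
    by_cases hc : vfst v = a <;> simp [hc]
  have e1 : ∀ ρ : SM n, (ρ.sum fun v k => if vfst v = 1 then k else 0) + TT isX1 (Lm ρ)
      = Lm ρ RVar.t + Lm ρ RVar.s := by
    intro ρ
    rw [Lm_hom (TT isX1) (TT_zero _) (TT_add _) (TT_smul _), hev, hev,
      ← sum_split, ← sum_split]
    apply Finsupp.sum_congr
    intro v _
    rw [TT1_lv, lv_t, lv_s]
    by_cases h1 : vfst v = 1 <;> cases hc : col v <;> simp [h1, hc]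
  have hfst : ∀ a : ℕ, (μ.sum fun v k => if vfst v = a then k else 0)
      = ν.sum fun v k => if vfst v = a then k else 0 := by
    intro a
    by_cases ha : a = 1
    · subst ha
      have q1 := e1 μ
      have q2 := e1 ν
      rw [h] at q1
      omega
    · rw [efst μ a ha, efst ν a ha, h]
  -- second coordinates are determined
  have esnd : ∀ (ρ : SM n) (b : ℕ), b ≠ n →
      (ρ.sum fun v k => if vsnd v = b then k else 0) = Lm ρ (RVar.x2 b) := by
    intro ρ b hb
    rw [hev]
    apply Finsupp.sum_congr
    intro v _
    rw [lv_x2 v b hb]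
    by_cases hc : vsnd v = b <;> simp [hc]
  have e2 : ∀ ρ : SM n, (ρ.sum fun v k => if vsnd v = n then k else 0) + TT isX2 (Lm ρ)
      = Lm ρ RVar.t + Lm ρ RVar.s := by
    intro ρ
    rw [Lm_hom (TT isX2) (TT_zero _) (TT_add _) (TT_smul _), hev, hev,
      ← sum_split, ← sum_split]
    apply Finsupp.sum_congr
    intro v _
    rw [TT2_lv, lv_t, lv_s]
    by_cases h1 : vsnd v = n <;> cases hc : col v <;> simp [h1, hc]
  have hsnd : ∀ b : ℕ, (μ.sum fun v k => if vsnd v = b then k else 0)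
      = ν.sum fun v k => if vsnd v = b then k else 0 := by
    intro b
    by_cases hb : b = n
    · subst hb
      have q1 := e2 μ
      have q2 := e2 ν
      rw [h] at q1
      omega
    · rw [esnd μ b hb, esnd ν b hb, h]
  -- the multiset of pairs is determined
  set Cμ : Multiset (ℕ × ℕ) := μ.toMultiset.map (fun v => (vfst v, vsnd v)) with hCμ
  set Cν : Multiset (ℕ × ℕ) := ν.toMultiset.map (fun v => (vfst v, vsnd v)) with hCν
  have hmapf : ∀ ρ : SM n, (ρ.toMultiset.map (fun v => (vfst v, vsnd v))).map Prod.fst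
      = ρ.toMultiset.map (fun v : SVar n => vfst v) := fun ρ => by
    rw [Multiset.map_map]; rfl
  have hmaps : ∀ ρ : SM n, (ρ.toMultiset.map (fun v => (vfst v, vsnd v))).map Prod.snd
      = ρ.toMultiset.map (fun v : SVar n => vsnd v) := fun ρ => by
    rw [Multiset.map_map]; rfl
  have hchain : ∀ ρ : SM n, Std ρ → ∀ p ∈ ρ.toMultiset.map (fun v => (vfst v, vsnd v)),
      ∀ q ∈ ρ.toMultiset.map (fun v => (vfst v, vsnd v)),
      (p.1 ≤ q.1 ∧ p.2 ≤ q.2) ∨ (q.1 ≤ p.1 ∧ q.2 ≤ p.2) := by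
    intro ρ hρ p hp q hq
    obtain ⟨x, hx, rfl⟩ := Multiset.mem_map.mp hp
    obtain ⟨y, hy, rfl⟩ := Multiset.mem_map.mp hq
    exact (hρ x ((Finsupp.mem_toMultiset ρ x).mp hx)
      y ((Finsupp.mem_toMultiset ρ y).mp hy)).1
  have hCeq : Cμ = Cν := by
    apply chain_multiset_eq Cμ Cν (hchain μ hμ) (hchain ν hν)
    · rw [hCμ, hCν, hmapf, hmapf]
      apply Multiset.ext.mpr
      intro a
      rw [cnt_map, cnt_map]
      exact hfst a
    · rw [hCμ, hCν, hmaps, hmaps]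
      apply Multiset.ext.mpr
      intro b
      rw [cnt_map, cnt_map]
      exact hsnd b
  have hcnt : ∀ p : ℕ × ℕ, (μ.sum fun v k => if (vfst v, vsnd v) = p then k else 0)
      = ν.sum fun v k => if (vfst v, vsnd v) = p then k else 0 := by
    intro p
    rw [← cnt_map μ (fun v => (vfst v, vsnd v)) p, ← cnt_map ν (fun v => (vfst v, vsnd v)) p,
      ← hCμ, ← hCν, hCeq]
  -- ξ-components are equal
  have hxieq : ∀ v : SVar n, col v = false → μ v = ν v := by
    intro v hcv
    by_contra hne
    rcases Nat.lt_or_ge (μ v) (ν v) with hlt | hge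
    · exact xi_no_drop ν μ hμ hν (fun p => (hcnt p).symm) hxi.symm v hcv hlt
    · have hlt : ν v < μ v := by omega
      exact xi_no_drop μ ν hν hμ hcnt hxi v hcv hlt
  -- ψ-components are equal
  have hpsieq : ∀ v : SVar n, col v = true → μ v = ν v := by
    intro v hcv
    by_cases hbd : vfst v = 1 ∨ vsnd v = n
    · have h2 := hcnt (vfst v, vsnd v)
      rw [cnt2_t μ v hcv hbd, cnt2_t ν v hcv hbd] at h2
      have h3 := hxieq (xv n (vfst v) (vsnd v) (vfst_pos v) (vfst_lt_vsnd v) (vsnd_le v) hbd) rfl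
      omega
    · have h2 := hcnt (vfst v, vsnd v)
      rw [cnt2_t' μ v hbd, cnt2_t' ν v hbd] at h2
      exact h2
  ext v
  cases hc : col v
  · exact hxieq v hc
  · exact hpsieq v hc


lemma indep (hn : 4 ≤ n) (g : Sring n) (hg : ∀ μ ∈ g.support, Std μ)
    (h0 : phi n g = 0) : g = 0 := by
  classical
  by_contra hne
  obtain ⟨μ0, hμ0, hmax⟩ :=
    Finset.exists_max_image g.support (fun μ => toLex (Lm μ))
      (MvPolynomial.support_nonempty.mpr hne)
  have split : ∀ μ : SM n, (monomial μ (coeff μ g) : Sring n)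
      = C (coeff μ g) * monomial μ 1 := fun μ => by rw [C_mul_monomial, mul_one]
  have hphiC : ∀ c : ℂ, phi n (C c) = C c := fun c => by
    rw [show (C c : Sring n) = algebraMap ℂ (Sring n) c from rfl, AlgHom.commutes]
    rfl
  have hcoeff : coeff (Lm μ0) (phi n g) = coeff μ0 g := by
    conv_lhs => rw [← support_sum_monomial_coeff g, map_sum, coeff_sum]
    rw [Finset.sum_eq_single μ0]
    · rw [split, map_mul, hphiC, coeff_C_mul, (Dom_phi_monomial μ0).1, mul_one]
    · intro μ hμ hne'
      rw [split, map_mul, hphiC, coeff_C_mul]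
      have hDom := Dom_phi_monomial μ
      have hlt : toLex (Lm μ) < toLex (Lm μ0) := by
        rcases lt_or_eq_of_le (hmax μ hμ) with h | h
        · exact h
        · exact absurd (Lm_inj hn μ μ0 (hg μ hμ) (hg μ0 hμ0) (toLex.injective h)) hne'
      have hz : coeff (Lm μ0) (phi n (monomial μ 1)) = 0 := by
        by_contra hc
        have hmem : Lm μ0 ∈ (phi n (monomial μ (1:ℂ))).support :=
          MvPolynomial.mem_support_iff.mpr hc
        by_cases he : Lm μ0 = Lm μ
        · rw [he] at hlt; exact absurd hlt (lt_irrefl _)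
        · exact absurd (hlt.trans (hDom.2 _ hmem he)) (lt_irrefl _)
      rw [hz, mul_zero]
    · intro h; exact absurd hμ0 h
  rw [h0, coeff_zero] at hcoeff
  exact (MvPolynomial.mem_support_iff.mp hμ0) hcoeff.symm

lemma span_supp_std (g : Sring n)
    (hg : g ∈ Submodule.span ℂ {p : Sring n | ∃ μ : SM n, Std μ ∧ p = monomial μ 1}) :
    ∀ μ ∈ g.support, Std μ := by
  classical
  refine Submodule.span_induction ?_ ?_ ?_ ?_ hg
  · rintro p ⟨μ, hμ, rfl⟩ β hβ
    rw [support_monomial, if_neg one_ne_zero] at hβ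
    rwa [Finset.mem_singleton.mp hβ]
  · intro μ hμ
    simp at hμ
  · intro p q _ _ hp hq μ hμ
    rcases Finset.mem_union.mp (MvPolynomial.support_add hμ) with h | h
    · exact hp μ h
    · exact hq μ h
  · intro c p _ hp μ hμ
    exact hp μ (MvPolynomial.support_smul hμ)

lemma all_mem_KK (f : Sring n) : f ∈ KK n := by
  classical
  rw [← support_sum_monomial_coeff f]
  apply Submodule.sum_mem
  intro μ _
  rw [show (monomial μ (coeff μ f) : Sring n) = coeff μ f • monomial μ 1 from by
    rw [smul_monomial, smul_eq_mul, mul_one]]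
  exact Submodule.smul_mem _ _ (mono_mem μ)

lemma ker_le_span (hn : 4 ≤ n) :
    RingHom.ker (phi n) ≤ Ideal.span (graphGens n) := by
  intro f hf
  have hK := all_mem_KK (n := n) f
  rw [KK, Submodule.mem_sup] at hK
  obtain ⟨j, hj, g, hg, rfl⟩ := hK
  have hjker : phi n j = 0 := span_le_ker n hn hj
  have hgker : phi n g = 0 := by
    have : phi n (j + g) = 0 := hf
    rw [map_add, hjker, zero_add] at this
    exact this
  have : g = 0 := indep hn g (span_supp_std g hg) hgker
  rw [this, add_zero]
  exact hj
end KerPhiAux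

/-- For `n ≥ 4`, the kernel of `φ : S → R` equals the ideal
generated by the six families of quadrics. -/
theorem ker_phi_eq_span (n : ℕ) (hn : 4 ≤ n) :
    RingHom.ker (phi n) = Ideal.span (graphGens n) :=
  le_antisymm (KerPhiAux.ker_le_span hn) (KerPhiAux.span_le_ker n hn)
end

section
/- Let n ≥ 4. The kernel of the ℂ-algebra homomorphism φ' : S → R equals the ideal of S generated by the following quadratic binomials: (1) ψ_{il}ψ_{jk} − ψ_{ik}ψ_{jl} for 1 ≤ i < j < k < l ≤ n; (2) ψ_{in}ξ_{jn} − ψ_{jn}ξ_{in} for 1 ≤ i < j < n; (3) ψ_{1j}ξ_{kn} − ψ_{kn}ξ_{1j} for 1 < j < n and 1 < k < n; (4) ψ_{1k}ξ_{1l} − ψ_{1l}ξ_{1k} for 1 < k < l ≤ n; (5) ξ_{1l}ψ_{jk} − ξ_{1k}ψ_{jl} for 1 < j < k < l < n; (6) ξ_{in}ψ_{jk} − ξ_{jn}ψ_{ik} for 1 ≤ i < j < k < n. -/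
open MvPolynomial

/-- The diagonal leading monomial `m'_{ij}` of the `2×2` minor on columns
`i < j`:  `m'_{1n} = 1`, `m'_{1i} = x_{2,i}`, `m'_{jn} = x_{1,j}`, and
`m'_{ij} = x_{1,i}x_{2,j}`. -/
noncomputable def leadMonomial (n i j : ℕ) : Rring :=
  if i = 1 ∧ j = n then 1
  else if i = 1 then X (RVar.x2 j)
  else if j = n then X (RVar.x1 i)
  else X (RVar.x1 i) * X (RVar.x2 j)

/-- The ℂ-algebra homomorphism `φ' : S → R`, `ψ_{ij} ↦ t·m'_{ij}`,
`ξ_{ij} ↦ s·m'_{ij}`. -/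
noncomputable def phi' (n : ℕ) : Sring n →ₐ[ℂ] Rring :=
  aeval fun v : SVar n =>
    (if v.1.1 = true then X RVar.t else X RVar.s) * leadMonomial n v.1.2.1 v.1.2.2


/-- The six families of quadratic binomial generators of the toric ideal of the
toric degeneration `T(2,n)` of the graph `G(2,n)`. -/
noncomputable def toricGens (n : ℕ) : Set (Sring n) :=
  {p | ∃ i j k l, 1 ≤ i ∧ i < j ∧ j < k ∧ k < l ∧ l ≤ n ∧
      p = psi n i l * psi n j k - psi n i k * psi n j l} ∪
  {p | ∃ i j, 1 ≤ i ∧ i < j ∧ j < n ∧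
      p = psi n i n * xi n j n - psi n j n * xi n i n} ∪
  {p | ∃ j k, 1 < j ∧ j < n ∧ 1 < k ∧ k < n ∧
      p = psi n 1 j * xi n k n - psi n k n * xi n 1 j} ∪
  {p | ∃ k l, 1 < k ∧ k < l ∧ l ≤ n ∧
      p = psi n 1 k * xi n 1 l - psi n 1 l * xi n 1 k} ∪
  {p | ∃ j k l, 1 < j ∧ j < k ∧ k < l ∧ l < n ∧
      p = xi n 1 l * psi n j k - xi n 1 k * psi n j l} ∪
  {p | ∃ i j k, 1 ≤ i ∧ i < j ∧ j < k ∧ k < n ∧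
      p = xi n i n * psi n j k - xi n j n * psi n i k}

deriving instance DecidableEq for RVar

namespace ToricAux

instance {n : ℕ} : DecidableEq (SVar n) := Subtype.instDecidableEq

variable {n : ℕ}

def rv (n : ℕ) (v : SVar n) : Multiset RVar :=
  (if v.1.1 = true then {RVar.t} else {RVar.s}) +
  ((if v.1.2.1 = 1 then 0 else {RVar.x1 v.1.2.1}) +
   (if v.1.2.2 = n then 0 else {RVar.x2 v.1.2.2}))

def rvars (M : Multiset (SVar n)) : Multiset RVar := M.bind (rv n)


noncomputable def prodS (M : Multiset (SVar n)) : Sring n := (M.map X).prod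


lemma lead_factor (i j : ℕ) : leadMonomial n i j =
    (if i = 1 then 1 else X (RVar.x1 i)) * (if j = n then 1 else X (RVar.x2 j)) := by
  unfold leadMonomial
  split_ifs with h1 h2 h3 <;> simp_all

lemma phi'_X (v : SVar n) : phi' n (X v) = ((rv n v).map X).prod := by
  obtain ⟨⟨b, i, j⟩, hv⟩ := v
  show (aeval _) (X _) = _
  refine (aeval_X _ _).trans ?_
  simp only [rv, lead_factor]
  cases b <;> by_cases h1 : i = 1 <;> by_cases h2 : j = n <;>
    simp [h1, h2] <;> ring

lemma prodX_multiset {σ : Type} [DecidableEq σ] (A : Multiset σ) :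
    (A.map (X (R := ℂ) : σ → MvPolynomial σ ℂ)).prod = monomial (Multiset.toFinsupp A) 1 := by
  induction A using Multiset.induction with
  | empty => simp [monomial_zero']
  | cons a A ih =>
      rw [Multiset.map_cons, Multiset.prod_cons, ih, ← Multiset.singleton_add,
        map_add, Multiset.toFinsupp_singleton]
      rw [X, monomial_mul, one_mul]

lemma prodX_inj {σ : Type} [DecidableEq σ] (A B : Multiset σ)
    (h : (A.map (X (R := ℂ) : σ → MvPolynomial σ ℂ)).prod
       = (B.map (X : σ → MvPolynomial σ ℂ)).prod) : A = B := by
  rw [prodX_multiset, prodX_multiset] at h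
  exact Multiset.toFinsupp.injective (monomial_left_injective one_ne_zero h)

lemma phi'_prodS (M : Multiset (SVar n)) :
    phi' n (prodS M) = monomial (Multiset.toFinsupp (rvars M)) 1 := by
  rw [← prodX_multiset]
  unfold prodS rvars
  rw [map_multiset_prod, Multiset.map_map, Multiset.map_bind, Multiset.prod_bind]
  congr 1
  exact Multiset.map_congr rfl (fun v _ => phi'_X v)




def lefts (M : Multiset (SVar n)) : Multiset ℕ := M.map fun v => v.1.2.1
def rights (M : Multiset (SVar n)) : Multiset ℕ := M.map fun v => v.1.2.2
def nxi (M : Multiset (SVar n)) : ℕ :=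
  Multiset.card (M.filter fun v => v.1.1 = false)

def isX1 : RVar → Bool | .x1 _ => true | _ => false
def isX2 : RVar → Bool | .x2 _ => true | _ => false
def idx : RVar → ℕ | .x1 i => i | .x2 j => j | _ => 0

def recx1 (A : Multiset RVar) : Multiset ℕ := (A.filter (fun r => isX1 r = true)).map idx
def recx2 (A : Multiset RVar) : Multiset ℕ := (A.filter (fun r => isX2 r = true)).map idx

lemma recx1_add (A B : Multiset RVar) : recx1 (A + B) = recx1 A + recx1 B := by
  simp [recx1, Multiset.filter_add]
lemma recx2_add (A B : Multiset RVar) : recx2 (A + B) = recx2 A + recx2 B := by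
  simp [recx2, Multiset.filter_add]

lemma rvars_cons (v : SVar n) (M : Multiset (SVar n)) :
    rvars (v ::ₘ M) = rv n v + rvars M := Multiset.cons_bind _ _ _

lemma count_s_rv (v : SVar n) :
    Multiset.count RVar.s (rv n v) = if v.1.1 = false then 1 else 0 := by
  obtain ⟨⟨b, i, j⟩, hv⟩ := v
  cases b <;> simp [rv] <;> split_ifs <;> simp

lemma count_t_rv (v : SVar n) :
    Multiset.count RVar.t (rv n v) = if v.1.1 = true then 1 else 0 := by
  obtain ⟨⟨b, i, j⟩, hv⟩ := v
  cases b <;> simp [rv] <;> split_ifs <;> simp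

lemma count_s_rvars (M : Multiset (SVar n)) :
    Multiset.count RVar.s (rvars M) = nxi M := by
  induction M using Multiset.induction with
  | empty => simp [rvars, nxi]
  | cons v M ih =>
      rw [rvars_cons, Multiset.count_add, ih, count_s_rv]
      by_cases h : v.1.1 = false <;>
        simp [nxi, Multiset.filter_cons, h] <;> omega

lemma card_eq_counts (M : Multiset (SVar n)) :
    Multiset.card M
      = Multiset.count RVar.s (rvars M) + Multiset.count RVar.t (rvars M) := by
  induction M using Multiset.induction with
  | empty => simp [rvars]
  | cons v M ih =>
      rw [rvars_cons, Multiset.count_add, Multiset.count_add, Multiset.card_cons, ih,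
        count_s_rv, count_t_rv]
      obtain ⟨⟨b, i, j⟩, hv⟩ := v
      cases b <;> simp <;> ring

lemma fmx1_rv (v : SVar n) :
    recx1 (rv n v) = if v.1.2.1 = 1 then 0 else {v.1.2.1} := by
  obtain ⟨⟨b, i, j⟩, hv⟩ := v
  cases b <;> by_cases h1 : i = 1 <;> by_cases h2 : j = n <;>
    simp [rv, recx1, isX1, idx, h1, h2, Multiset.filter_add, Multiset.filter_singleton]

lemma fmx2_rv (v : SVar n) :
    recx2 (rv n v) = if v.1.2.2 = n then 0 else {v.1.2.2} := by
  obtain ⟨⟨b, i, j⟩, hv⟩ := v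
  cases b <;> by_cases h1 : i = 1 <;> by_cases h2 : j = n <;>
    simp [rv, recx2, isX2, idx, h1, h2, Multiset.filter_add, Multiset.filter_singleton]

lemma lefts_rec (M : Multiset (SVar n)) :
    lefts M = Multiset.replicate
        (Multiset.card M - Multiset.card (recx1 (rvars M))) 1
      + recx1 (rvars M) := by
  induction M using Multiset.induction with
  | empty => simp [lefts, rvars, recx1]
  | cons v M ih =>
      have hle : Multiset.card (recx1 (rvars M)) ≤ Multiset.card M := by
        have := congrArg Multiset.card ih
        simp [lefts] at this
        omega
      rw [rvars_cons, recx1_add, fmx1_rv]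
      rw [lefts, Multiset.map_cons]
      show _ ::ₘ lefts M = _
      rw [ih]
      by_cases h1 : v.1.2.1 = 1
      · simp only [h1, if_true]
        rw [Multiset.card_cons, zero_add]
        have : Multiset.card M + 1 - Multiset.card (recx1 (rvars M))
            = (Multiset.card M - Multiset.card (recx1 (rvars M))) + 1 := by omega
        rw [this, Multiset.replicate_succ, Multiset.cons_add]
      · simp only [h1, if_false]
        rw [Multiset.card_cons, Multiset.singleton_add, Multiset.card_cons]
        have : Multiset.card M + 1 - (Multiset.card (recx1 (rvars M)) + 1)
            = Multiset.card M - Multiset.card (recx1 (rvars M)) := by omega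
        rw [this, Multiset.add_cons]

lemma rights_rec (M : Multiset (SVar n)) :
    rights M = Multiset.replicate
        (Multiset.card M - Multiset.card (recx2 (rvars M))) n
      + recx2 (rvars M) := by
  induction M using Multiset.induction with
  | empty => simp [rights, rvars, recx2]
  | cons v M ih =>
      have hle : Multiset.card (recx2 (rvars M)) ≤ Multiset.card M := by
        have := congrArg Multiset.card ih
        simp [rights] at this
        omega
      rw [rvars_cons, recx2_add, fmx2_rv]
      rw [rights, Multiset.map_cons]
      show _ ::ₘ rights M = _
      rw [ih]
      by_cases h1 : v.1.2.2 = n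
      · simp only [h1, if_true]
        rw [Multiset.card_cons, zero_add]
        have : Multiset.card M + 1 - Multiset.card (recx2 (rvars M))
            = (Multiset.card M - Multiset.card (recx2 (rvars M))) + 1 := by omega
        rw [this, Multiset.replicate_succ, Multiset.cons_add]
      · simp only [h1, if_false]
        rw [Multiset.card_cons, Multiset.singleton_add, Multiset.card_cons]
        have : Multiset.card M + 1 - (Multiset.card (recx2 (rvars M)) + 1)
            = Multiset.card M - Multiset.card (recx2 (rvars M)) := by omega
        rw [this, Multiset.add_cons]

lemma inv_of_rvars {M M' : Multiset (SVar n)} (h : rvars M = rvars M') :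
    lefts M = lefts M' ∧ rights M = rights M' ∧ nxi M = nxi M' := by
  have hc : Multiset.card M = Multiset.card M' := by
    rw [card_eq_counts, card_eq_counts, h]
  refine ⟨?_, ?_, ?_⟩
  · rw [lefts_rec, lefts_rec, h, hc]
  · rw [rights_rec, rights_rec, h, hc]
  · rw [← count_s_rvars, ← count_s_rvars, h]




lemma phi'_psi {i j : ℕ} (h : 1 ≤ i ∧ i < j ∧ j ≤ n) :
    phi' n (psi n i j) = X RVar.t * leadMonomial n i j := by
  rw [psi, dif_pos h]
  exact (aeval_X _ _).trans (by simp)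

lemma phi'_xi {i j : ℕ} (h : 1 ≤ i ∧ i < j ∧ j ≤ n ∧ (i = 1 ∨ j = n)) :
    phi' n (xi n i j) = X RVar.s * leadMonomial n i j := by
  rw [xi, dif_pos h]
  exact (aeval_X _ _).trans (by simp)

lemma span_le_ker : Ideal.span (toricGens n) ≤ RingHom.ker (phi' n) := by
  rw [Ideal.span_le]
  rintro g (((((⟨i,j,k,l,h1,h2,h3,h4,h5,rfl⟩ | ⟨i,j,h1,h2,h3,rfl⟩) |
      ⟨j,k,h1,h2,h3,h4,rfl⟩) | ⟨k,l,h1,h2,h3,rfl⟩) |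
      ⟨j,k,l,h1,h2,h3,h4,rfl⟩) | ⟨i,j,k,h1,h2,h3,h4,rfl⟩) <;>
    refine SetLike.mem_coe.2 (RingHom.mem_ker.2 ?_)
  · rw [map_sub, map_mul, map_mul, phi'_psi (by omega), phi'_psi (by omega),
      phi'_psi (by omega), phi'_psi (by omega)]
    simp only [lead_factor]
    ring
  · rw [map_sub, map_mul, map_mul, phi'_psi (by omega), phi'_psi (by omega),
      phi'_xi (by omega), phi'_xi (by omega)]
    simp only [lead_factor]
    ring
  · rw [map_sub, map_mul, map_mul, phi'_psi (by omega), phi'_psi (by omega),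
      phi'_xi (by omega), phi'_xi (by omega)]
    simp only [lead_factor]
    ring
  · rw [map_sub, map_mul, map_mul, phi'_psi (by omega), phi'_psi (by omega),
      phi'_xi (by omega), phi'_xi (by omega)]
    simp only [lead_factor]
    ring
  · rw [map_sub, map_mul, map_mul, phi'_psi (by omega), phi'_psi (by omega),
      phi'_xi (by omega), phi'_xi (by omega)]
    simp only [lead_factor]
    ring
  · rw [map_sub, map_mul, map_mul, phi'_psi (by omega), phi'_psi (by omega),
      phi'_xi (by omega), phi'_xi (by omega)]
    simp only [lead_factor]
    ring

lemma X_eq_psi (u : SVar n) (h : u.1.1 = true) : X u = psi n u.1.2.1 u.1.2.2 := by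
  obtain ⟨⟨b, i, j⟩, hv⟩ := u
  simp only at h
  subst h
  rw [psi, dif_pos ⟨hv.1, hv.2.1, hv.2.2.1⟩]

lemma X_eq_xi (u : SVar n) (h : u.1.1 = false) : X u = xi n u.1.2.1 u.1.2.2 := by
  obtain ⟨⟨b, i, j⟩, hv⟩ := u
  simp only at h
  subst h
  have hor : (false, i, j).2.1 = 1 ∨ (false, i, j).2.2 = n := by
    rcases hv.2.2.2 with h' | h'
    · exact absurd h' (by simp)
    · exact h'
  rw [xi, dif_pos ⟨hv.1, hv.2.1, hv.2.2.1, hor⟩]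

lemma gen1_mem {i j k l : ℕ} (h1 : 1 ≤ i) (h2 : i < j) (h3 : j < k) (h4 : k < l)
    (h5 : l ≤ n) :
    psi n i l * psi n j k - psi n i k * psi n j l ∈ Ideal.span (toricGens n) :=
  Ideal.subset_span (Or.inl (Or.inl (Or.inl (Or.inl (Or.inl
    ⟨i, j, k, l, h1, h2, h3, h4, h5, rfl⟩)))))

lemma gen2_mem {i j : ℕ} (h1 : 1 ≤ i) (h2 : i < j) (h3 : j < n) :
    psi n i n * xi n j n - psi n j n * xi n i n ∈ Ideal.span (toricGens n) :=
  Ideal.subset_span (Or.inl (Or.inl (Or.inl (Or.inl (Or.inr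
    ⟨i, j, h1, h2, h3, rfl⟩)))))

lemma gen3_mem {j k : ℕ} (h1 : 1 < j) (h2 : j < n) (h3 : 1 < k) (h4 : k < n) :
    psi n 1 j * xi n k n - psi n k n * xi n 1 j ∈ Ideal.span (toricGens n) :=
  Ideal.subset_span (Or.inl (Or.inl (Or.inl (Or.inr ⟨j, k, h1, h2, h3, h4, rfl⟩))))

lemma gen4_mem {k l : ℕ} (h1 : 1 < k) (h2 : k < l) (h3 : l ≤ n) :
    psi n 1 k * xi n 1 l - psi n 1 l * xi n 1 k ∈ Ideal.span (toricGens n) :=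
  Ideal.subset_span (Or.inl (Or.inl (Or.inr ⟨k, l, h1, h2, h3, rfl⟩)))

lemma gen5_mem {j k l : ℕ} (h1 : 1 < j) (h2 : j < k) (h3 : k < l) (h4 : l < n) :
    xi n 1 l * psi n j k - xi n 1 k * psi n j l ∈ Ideal.span (toricGens n) :=
  Ideal.subset_span (Or.inl (Or.inr ⟨j, k, l, h1, h2, h3, h4, rfl⟩))

lemma gen6_mem {i j k : ℕ} (h1 : 1 ≤ i) (h2 : i < j) (h3 : j < k) (h4 : k < n) :
    xi n i n * psi n j k - xi n j n * psi n i k ∈ Ideal.span (toricGens n) :=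
  Ideal.subset_span (Or.inr ⟨i, j, k, h1, h2, h3, h4, rfl⟩)

lemma step_mem (M₀ : Multiset (SVar n)) {u v u' v' : SVar n}
    (h : (X u * X v - X u' * X v' : Sring n) ∈ Ideal.span (toricGens n)) :
    prodS (u ::ₘ v ::ₘ M₀) - prodS (u' ::ₘ v' ::ₘ M₀) ∈ Ideal.span (toricGens n) := by
  have heq : prodS (u ::ₘ v ::ₘ M₀) - prodS (u' ::ₘ v' ::ₘ M₀)
      = (X u * X v - X u' * X v') * prodS M₀ := by
    simp only [prodS, Multiset.map_cons, Multiset.prod_cons]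
    ring
  rw [heq]
  exact Ideal.mul_mem_right _ _ h



/-! ### Normal forms and reduction -/

def segs (M : Multiset (SVar n)) : Multiset (ℕ × ℕ) := M.map fun v => (v.1.2.1, v.1.2.2)

def noCrossP (T : Multiset (ℕ × ℕ)) : Prop := ∀ p ∈ T, ∀ q ∈ T, ¬(p.1 < q.1 ∧ q.2 < p.2)

/-- (i,j) < (k,l) lexicographically -/
def plex (p q : ℕ × ℕ) : Prop := p.1 < q.1 ∨ (p.1 = q.1 ∧ p.2 < q.2)

def noLab (n : ℕ) (M : Multiset (SVar n)) : Prop :=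
  ∀ u ∈ M, ∀ v ∈ M, u.1.1 = true → v.1.1 = false → (u.1.2.1 = 1 ∨ u.1.2.2 = n) →
    ¬ plex (u.1.2.1, u.1.2.2) (v.1.2.1, v.1.2.2)

def isNF (n : ℕ) (M : Multiset (SVar n)) : Prop := noCrossP (segs M) ∧ noLab n M

def sumLR (M : Multiset (SVar n)) : ℕ := (M.map fun v => v.1.2.1 * v.1.2.2).sum

def wt (M : Multiset (SVar n)) : ℕ :=
  ((M.filter fun v => v.1.1 = false).map fun v => v.1.2.1 * (n + 1) + v.1.2.2).sum

def mu (M : Multiset (SVar n)) : ℕ :=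
  (Multiset.card M * (n * n) - sumLR M) * (Multiset.card M * ((n + 1) * (n + 1)) + 1) + wt M

lemma segs_cons (v : SVar n) (M : Multiset (SVar n)) :
    segs (v ::ₘ M) = (v.1.2.1, v.1.2.2) ::ₘ segs M := Multiset.map_cons _ _ _

lemma lefts_cons (v : SVar n) (M : Multiset (SVar n)) :
    lefts (v ::ₘ M) = v.1.2.1 ::ₘ lefts M := Multiset.map_cons _ _ _

lemma rights_cons (v : SVar n) (M : Multiset (SVar n)) :
    rights (v ::ₘ M) = v.1.2.2 ::ₘ rights M := Multiset.map_cons _ _ _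

lemma nxi_cons (v : SVar n) (M : Multiset (SVar n)) :
    nxi (v ::ₘ M) = (if v.1.1 = false then 1 else 0) + nxi M := by
  by_cases h : v.1.1 = false <;> simp [nxi, Multiset.filter_cons, h] <;> omega

lemma sumLR_cons (v : SVar n) (M : Multiset (SVar n)) :
    sumLR (v ::ₘ M) = v.1.2.1 * v.1.2.2 + sumLR M := by
  simp [sumLR]

lemma wt_cons (v : SVar n) (M : Multiset (SVar n)) :
    wt (v ::ₘ M) = (if v.1.1 = false then v.1.2.1 * (n + 1) + v.1.2.2 else 0) + wt M := by
  by_cases h : v.1.1 = false <;> simp [wt, Multiset.filter_cons, h]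

lemma sumLR_le (M : Multiset (SVar n)) : sumLR M ≤ Multiset.card M * ((n - 1) * n) := by
  unfold sumLR
  have := Multiset.sum_le_card_nsmul (M.map fun v => v.1.2.1 * v.1.2.2) ((n - 1) * n) ?_
  · simpa using this
  · intro x hx
    obtain ⟨v, hv, rfl⟩ := Multiset.mem_map.1 hx
    have h1 := v.2.1
    have h2 := v.2.2.1
    have h3 := v.2.2.2.1
    exact Nat.mul_le_mul (by omega) h3

lemma wt_le (M : Multiset (SVar n)) : wt M ≤ Multiset.card M * ((n + 1) * (n + 1)) := by
  unfold wt
  have hb : ∀ x ∈ (M.filter fun v => v.1.1 = false).map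
      (fun v => v.1.2.1 * (n + 1) + v.1.2.2), x ≤ (n + 1) * (n + 1) := by
    intro x hx
    obtain ⟨v, hv, rfl⟩ := Multiset.mem_map.1 hx
    have h2 := v.2.2.1
    have h3 := v.2.2.2.1
    calc v.1.2.1 * (n + 1) + v.1.2.2 ≤ n * (n + 1) + (n + 1) :=
          Nat.add_le_add (Nat.mul_le_mul_right _ (by omega)) (by omega)
      _ = (n + 1) * (n + 1) := by ring
  have := Multiset.sum_le_card_nsmul _ _ hb
  calc ((M.filter fun v => v.1.1 = false).map fun v => v.1.2.1 * (n + 1) + v.1.2.2).sum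
      ≤ Multiset.card ((M.filter fun v => v.1.1 = false).map
          fun v => v.1.2.1 * (n + 1) + v.1.2.2) * ((n + 1) * (n + 1)) := by simpa using this
    _ ≤ Multiset.card M * ((n + 1) * (n + 1)) := by
        refine Nat.mul_le_mul_right _ ?_
        rw [Multiset.card_map]
        exact Multiset.card_le_card (Multiset.filter_le _ _)

lemma mu_lt_uncross (hn : 4 ≤ n) {M M' : Multiset (SVar n)}
    (hcard : Multiset.card M' = Multiset.card M) (h0 : M ≠ 0)
    (hs : sumLR M < sumLR M') : mu M' < mu M := by
  have hcp : 1 ≤ Multiset.card M := Multiset.card_pos.2 h0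
  have hb : sumLR M < Multiset.card M * (n * n) := by
    have h1 := sumLR_le M
    have hA : (n - 1) * n < n * n :=
      mul_lt_mul_of_pos_right (by omega) (by omega)
    have h2 : Multiset.card M * ((n - 1) * n) < Multiset.card M * (n * n) :=
      mul_lt_mul_of_pos_left hA (by omega)
    omega
  have hW : wt M' < Multiset.card M * ((n + 1) * (n + 1)) + 1 := by
    have := wt_le M'
    rw [hcard] at this
    omega
  have h1 : Multiset.card M * (n * n) - sumLR M' < Multiset.card M * (n * n) - sumLR M :=
    Nat.sub_lt_sub_left hb hs
  unfold mu
  rw [hcard]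
  set W := Multiset.card M * ((n + 1) * (n + 1)) + 1
  set a' := Multiset.card M * (n * n) - sumLR M'
  set a := Multiset.card M * (n * n) - sumLR M
  calc a' * W + wt M' < a' * W + W := by omega
    _ = (a' + 1) * W := by ring
    _ ≤ a * W := Nat.mul_le_mul_right _ (by omega)
    _ ≤ a * W + wt M := Nat.le_add_right _ _

lemma mu_lt_swap {M M' : Multiset (SVar n)}
    (hcard : Multiset.card M' = Multiset.card M) (hs : sumLR M' = sumLR M)
    (hw : wt M' < wt M) : mu M' < mu M := by
  unfold mu
  rw [hcard, hs]
  omega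

lemma plex_enc {i j k l : ℕ} (hj : j ≤ n) (hl : l ≤ n)
    (h : plex (i, j) (k, l)) : i * (n + 1) + j < k * (n + 1) + l := by
  rcases h with h | ⟨h1, h2⟩
  · calc i * (n + 1) + j < i * (n + 1) + (n + 1) := by omega
      _ = (i + 1) * (n + 1) := by ring
      _ ≤ k * (n + 1) := Nat.mul_le_mul_right _ (by omega)
      _ ≤ k * (n + 1) + l := Nat.le_add_right _ _
  · simp only at h1
    subst h1
    omega

def mkv (b : Bool) (i j : ℕ) (h : 1 ≤ i ∧ i < j ∧ j ≤ n ∧ (b = true ∨ i = 1 ∨ j = n)) :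
    SVar n := ⟨(b, i, j), h⟩

@[simp] lemma mkv_lab (b : Bool) (i j : ℕ) (h) : ((mkv (n := n) b i j h).1).1 = b := rfl
@[simp] lemma mkv_L (b : Bool) (i j : ℕ) (h) : ((mkv (n := n) b i j h).1).2.1 = i := rfl
@[simp] lemma mkv_R (b : Bool) (i j : ℕ) (h) : ((mkv (n := n) b i j h).1).2.2 = j := rfl

lemma X_psi_mkv (i j : ℕ) (h) : (X (mkv (n := n) true i j h) : Sring n) = psi n i j :=
  X_eq_psi _ rfl

lemma X_xi_mkv (i j : ℕ) (h) : (X (mkv (n := n) false i j h) : Sring n) = xi n i j :=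
  X_eq_xi _ rfl

def ExNF (n : ℕ) (M : Multiset (SVar n)) : Prop :=
  ∃ N : Multiset (SVar n), lefts N = lefts M ∧ rights N = rights M ∧ nxi N = nxi M ∧
    prodS M - prodS N ∈ Ideal.span (toricGens n) ∧ isNF n N

lemma finish_step {k : ℕ} (ih : ∀ M : Multiset (SVar n), mu M < k → ExNF n M)
    {M M₀ : Multiset (SVar n)} {u v u' v' : SVar n}
    (hMeq : M = u ::ₘ v ::ₘ M₀) (hMk : mu M < k + 1)
    (hmu : mu (u' ::ₘ v' ::ₘ M₀) < mu M)
    (hrel : (X u * X v - X u' * X v' : Sring n) ∈ Ideal.span (toricGens n))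
    (hl : lefts (u' ::ₘ v' ::ₘ M₀) = lefts M)
    (hr : rights (u' ::ₘ v' ::ₘ M₀) = rights M)
    (hx : nxi (u' ::ₘ v' ::ₘ M₀) = nxi M) : ExNF n M := by
  obtain ⟨N, h1, h2, h3, h4, h5⟩ := ih (u' ::ₘ v' ::ₘ M₀) (by omega)
  refine ⟨N, by rw [h1, hl], by rw [h2, hr], by rw [h3, hx], ?_, h5⟩
  have : prodS M - prodS N
      = (prodS (u ::ₘ v ::ₘ M₀) - prodS (u' ::ₘ v' ::ₘ M₀))
        + (prodS (u' ::ₘ v' ::ₘ M₀) - prodS N) := by rw [← hMeq]; ring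
  rw [this]
  exact Ideal.add_mem _ (step_mem M₀ hrel) h4

lemma sum_ineq {i j k l : ℕ} (hij : i < j) (hkl : k < l) :
    i * l + j * k < i * k + j * l := by
  nlinarith

lemma exists_nf (hn : 4 ≤ n) (M : Multiset (SVar n)) : ExNF n M := by
  suffices H : ∀ (k : ℕ) (M : Multiset (SVar n)), mu M < k → ExNF n M from
    H (mu M + 1) M (by omega)
  intro k
  induction k with
  | zero => exact fun M h => absurd h (by omega)
  | succ k ih =>
    intro M hMk
    by_cases hc : ∃ u ∈ M, ∃ v ∈ M, u.1.2.1 < v.1.2.1 ∧ v.1.2.2 < u.1.2.2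
    · -- uncross a nested pair
      obtain ⟨u, hu, v, hv, hcr1, hcr2⟩ := hc
      have hne : u ≠ v := by
        intro h; rw [h] at hcr1; omega
      have hvmem : v ∈ M.erase u := (Multiset.mem_erase_of_ne (Ne.symm hne)).2 hv
      set M₀ := (M.erase u).erase v with hM₀
      have hMeq : M = u ::ₘ v ::ₘ M₀ := by
        rw [hM₀, Multiset.cons_erase hvmem, Multiset.cons_erase hu]
      obtain ⟨hu1, hu2, hu3, hu4⟩ := u.2
      obtain ⟨hv1, hv2, hv3, hv4⟩ := v.2
      have h0 : M ≠ 0 := by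
        simp [hMeq]
      have hvlab : v.1.1 = true := by
        rcases hv4 with h | h | h
        · exact h
        · omega
        · omega
      have hsum : ∀ w w' : SVar n, w.1.2.1 = u.1.2.1 → w.1.2.2 = v.1.2.2 →
          w'.1.2.1 = v.1.2.1 → w'.1.2.2 = u.1.2.2 →
          mu (w ::ₘ w' ::ₘ M₀) < mu M := by
        intro w w' e1 e2 e3 e4
        apply mu_lt_uncross hn _ h0
        · rw [hMeq]
          rw [sumLR_cons, sumLR_cons, sumLR_cons, sumLR_cons, e1, e2, e3, e4]
          have := sum_ineq hcr1 hcr2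
          omega
        · rw [hMeq]
          simp
      have hsum' : ∀ w w' : SVar n, w.1.2.1 = v.1.2.1 → w.1.2.2 = u.1.2.2 →
          w'.1.2.1 = u.1.2.1 → w'.1.2.2 = v.1.2.2 →
          mu (w ::ₘ w' ::ₘ M₀) < mu M := by
        intro w w' e1 e2 e3 e4
        apply mu_lt_uncross hn _ h0
        · rw [hMeq]
          rw [sumLR_cons, sumLR_cons, sumLR_cons, sumLR_cons, e1, e2, e3, e4]
          have := sum_ineq hcr1 hcr2
          omega
        · rw [hMeq]
          simp
      by_cases hul : u.1.1 = true
      · -- both psi : relation (1)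
        refine finish_step ih hMeq hMk
          (u' := mkv true u.1.2.1 v.1.2.2 ⟨hu1, by omega, by omega, Or.inl rfl⟩)
          (v' := mkv true v.1.2.1 u.1.2.2 ⟨by omega, by omega, hu3, Or.inl rfl⟩)
          (hsum _ _ rfl rfl rfl rfl) ?_ ?_ ?_ ?_
        · rw [X_eq_psi u hul, X_eq_psi v hvlab, X_psi_mkv, X_psi_mkv]
          exact gen1_mem hu1 hcr1 hv2 hcr2 hu3
        · rw [hMeq, lefts_cons, lefts_cons, lefts_cons, lefts_cons]; rfl
        · rw [hMeq, rights_cons, rights_cons, rights_cons, rights_cons]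
          exact Multiset.cons_swap _ _ _
        · rw [hMeq, nxi_cons, nxi_cons, nxi_cons, nxi_cons]
          simp [hul, hvlab, mkv]
      · -- u is xi
        have hul' : u.1.1 = false := by
          revert hul; cases u.1.1 <;> simp
        rcases hu4 with h | h | h
        · rw [h] at hul; exact absurd rfl hul
        · -- u.1.2.1 = 1 : need case split on u.1.2.2 = n
          by_cases hn' : u.1.2.2 = n
          · -- relation (6) with i = 1
            refine finish_step ih hMeq hMk
              (u' := mkv false v.1.2.1 u.1.2.2 ⟨by omega, by omega, hu3, Or.inr (Or.inr hn')⟩)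
              (v' := mkv true u.1.2.1 v.1.2.2 ⟨hu1, by omega, by omega, Or.inl rfl⟩)
              (hsum' _ _ rfl rfl rfl rfl) ?_ ?_ ?_ ?_
            · rw [X_eq_xi u hul', X_eq_psi v hvlab, X_xi_mkv, X_psi_mkv]
              rw [hn']
              exact gen6_mem hu1 hcr1 hv2 (by omega)
            · rw [hMeq, lefts_cons, lefts_cons, lefts_cons, lefts_cons]
              exact Multiset.cons_swap _ _ _
            · rw [hMeq, rights_cons, rights_cons, rights_cons, rights_cons]; rfl
            · rw [hMeq, nxi_cons, nxi_cons, nxi_cons, nxi_cons]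
              simp [hul', hvlab, mkv]
          · -- relation (5)
            refine finish_step ih hMeq hMk
              (u' := mkv false u.1.2.1 v.1.2.2 ⟨hu1, by omega, by omega, Or.inr (Or.inl h)⟩)
              (v' := mkv true v.1.2.1 u.1.2.2 ⟨by omega, by omega, hu3, Or.inl rfl⟩)
              (hsum _ _ rfl rfl rfl rfl) ?_ ?_ ?_ ?_
            · rw [X_eq_xi u hul', X_eq_psi v hvlab, X_xi_mkv, X_psi_mkv]
              rw [h]
              exact gen5_mem (by omega) hv2 hcr2 (by omega)
            · rw [hMeq, lefts_cons, lefts_cons, lefts_cons, lefts_cons]; rfl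
            · rw [hMeq, rights_cons, rights_cons, rights_cons, rights_cons]
              exact Multiset.cons_swap _ _ _
            · rw [hMeq, nxi_cons, nxi_cons, nxi_cons, nxi_cons]
              simp [hul', hvlab, mkv]
        · -- u.1.2.2 = n : relation (6)
          refine finish_step ih hMeq hMk
            (u' := mkv false v.1.2.1 u.1.2.2 ⟨by omega, by omega, hu3, Or.inr (Or.inr h)⟩)
            (v' := mkv true u.1.2.1 v.1.2.2 ⟨hu1, by omega, by omega, Or.inl rfl⟩)
            (hsum' _ _ rfl rfl rfl rfl) ?_ ?_ ?_ ?_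
          · rw [X_eq_xi u hul', X_eq_psi v hvlab, X_xi_mkv, X_psi_mkv]
            rw [h]
            exact gen6_mem hu1 hcr1 hv2 (by omega)
          · rw [hMeq, lefts_cons, lefts_cons, lefts_cons, lefts_cons]
            exact Multiset.cons_swap _ _ _
          · rw [hMeq, rights_cons, rights_cons, rights_cons, rights_cons]; rfl
          · rw [hMeq, nxi_cons, nxi_cons, nxi_cons, nxi_cons]
            simp [hul', hvlab, mkv]
    · by_cases hlab : ∃ u ∈ M, ∃ v ∈ M, u.1.1 = true ∧ v.1.1 = false ∧
          (u.1.2.1 = 1 ∨ u.1.2.2 = n) ∧ plex (u.1.2.1, u.1.2.2) (v.1.2.1, v.1.2.2)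
      · -- swap labels
        obtain ⟨u, hu, v, hv, hut, hvf, htouch, hplex⟩ := hlab
        have hne : u ≠ v := by
          intro h; rw [h, hvf] at hut; exact Bool.noConfusion hut
        have hvmem : v ∈ M.erase u := (Multiset.mem_erase_of_ne (Ne.symm hne)).2 hv
        set M₀ := (M.erase u).erase v with hM₀
        have hMeq : M = u ::ₘ v ::ₘ M₀ := by
          rw [hM₀, Multiset.cons_erase hvmem, Multiset.cons_erase hu]
        obtain ⟨hu1, hu2, hu3, _⟩ := u.2
        obtain ⟨hv1, hv2, hv3, hv4⟩ := v.2
        have hvor : v.1.2.1 = 1 ∨ v.1.2.2 = n := by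
          rcases hv4 with h | h
          · rw [h] at hvf; exact Bool.noConfusion hvf
          · exact h
        refine finish_step ih hMeq hMk
          (u' := mkv false u.1.2.1 u.1.2.2 ⟨hu1, hu2, hu3, Or.inr htouch⟩)
          (v' := mkv true v.1.2.1 v.1.2.2 ⟨hv1, hv2, hv3, Or.inl rfl⟩) ?_ ?_ ?_ ?_ ?_
        · -- measure decrease : same sumLR, smaller wt
          apply mu_lt_swap
          · rw [hMeq]; simp
          · rw [hMeq]
            rw [sumLR_cons, sumLR_cons, sumLR_cons, sumLR_cons]
            simp [mkv_L, mkv_R]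
          · rw [hMeq]
            rw [wt_cons, wt_cons, wt_cons, wt_cons]
            have henc : u.1.2.1 * (n + 1) + u.1.2.2 < v.1.2.1 * (n + 1) + v.1.2.2 :=
              plex_enc hu3 hv3 hplex
            simp only [mkv_lab, mkv_L, mkv_R, hut, hvf]
            norm_num
            omega
        · -- the relation
          rw [X_eq_psi u hut, X_eq_xi v hvf, X_xi_mkv, X_psi_mkv]
          by_cases hA : u.1.2.2 = n ∧ v.1.2.2 = n
          · -- relation (2)
            obtain ⟨hA1, hA2⟩ := hA
            have hik : u.1.2.1 < v.1.2.1 := by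
              rcases hplex with h | ⟨h1, h2⟩
              · exact h
              · omega
            rw [hA1, hA2]
            have hmem := gen2_mem (i := u.1.2.1) (j := v.1.2.1) hu1 hik (show v.1.2.1 < n by omega)
            have heq : psi n u.1.2.1 n * xi n v.1.2.1 n - xi n u.1.2.1 n * psi n v.1.2.1 n
                = psi n u.1.2.1 n * xi n v.1.2.1 n - psi n v.1.2.1 n * xi n u.1.2.1 n := by
              ring
            rw [heq]
            exact hmem
          · by_cases hB : u.1.2.1 = 1 ∧ v.1.2.1 = 1
            · -- relation (4)
              obtain ⟨hB1, hB2⟩ := hB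
              have hjl : u.1.2.2 < v.1.2.2 := by
                rcases hplex with h | ⟨h1, h2⟩
                · omega
                · exact h2
              rw [hB1, hB2]
              have hmem := gen4_mem (k := u.1.2.2) (l := v.1.2.2) (show 1 < u.1.2.2 by omega) hjl hv3
              have heq : psi n 1 u.1.2.2 * xi n 1 v.1.2.2 - xi n 1 u.1.2.2 * psi n 1 v.1.2.2
                  = psi n 1 u.1.2.2 * xi n 1 v.1.2.2 - psi n 1 v.1.2.2 * xi n 1 u.1.2.2 := by
                ring
              rw [heq]; exact hmem
            · -- mixed : relation (3) in one of the two orientations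
              by_cases hi1 : u.1.2.1 = 1
              · -- then v.1.2.1 ≠ 1, so v.1.2.2 = n, and u.1.2.2 ≠ n
                have hk1 : v.1.2.1 ≠ 1 := fun h => hB ⟨hi1, h⟩
                have hln : v.1.2.2 = n := hvor.resolve_left hk1
                have hjn : u.1.2.2 ≠ n := fun h => hA ⟨h, hln⟩
                rw [hi1, hln]
                have hmem := gen3_mem (j := u.1.2.2) (k := v.1.2.1)
                  (show 1 < u.1.2.2 by omega) (show u.1.2.2 < n by omega)
                  (show 1 < v.1.2.1 by omega) (show v.1.2.1 < n by omega)
                have heq : psi n 1 u.1.2.2 * xi n v.1.2.1 n - xi n 1 u.1.2.2 * psi n v.1.2.1 n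
                    = psi n 1 u.1.2.2 * xi n v.1.2.1 n - psi n v.1.2.1 n * xi n 1 u.1.2.2 := by
                  ring
                rw [heq]; exact hmem
              · -- u.1.2.2 = n, and v.1.2.1 = 1 with v.1.2.2 ≠ n
                have hjn : u.1.2.2 = n := htouch.resolve_left hi1
                have hln : v.1.2.2 ≠ n := fun h => hA ⟨hjn, h⟩
                have hk1 : v.1.2.1 = 1 := hvor.resolve_right hln
                rw [hjn, hk1]
                have hmem := gen3_mem (j := v.1.2.2) (k := u.1.2.1)
                  (show 1 < v.1.2.2 by omega) (show v.1.2.2 < n by omega)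
                  (show 1 < u.1.2.1 by omega) (show u.1.2.1 < n by omega)
                have heq : psi n u.1.2.1 n * xi n 1 v.1.2.2 - xi n u.1.2.1 n * psi n 1 v.1.2.2
                    = -(psi n 1 v.1.2.2 * xi n u.1.2.1 n - psi n u.1.2.1 n * xi n 1 v.1.2.2) := by
                  ring
                rw [heq]; exact neg_mem hmem
        · rw [hMeq, lefts_cons, lefts_cons, lefts_cons, lefts_cons]
          simp [mkv_L]
        · rw [hMeq, rights_cons, rights_cons, rights_cons, rights_cons]
          simp [mkv_R]
        · rw [hMeq, nxi_cons, nxi_cons, nxi_cons, nxi_cons]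
          simp [hut, hvf, mkv_lab]
      · -- M is already a normal form
        push_neg at hc hlab
        refine ⟨M, rfl, rfl, rfl, by rw [sub_self]; exact Ideal.zero_mem _, ?_, ?_⟩
        · intro p hp q hq hcross
          obtain ⟨a, ha, rfl⟩ := Multiset.mem_map.1 hp
          obtain ⟨b, hb, rfl⟩ := Multiset.mem_map.1 hq
          have := hc a ha b hb hcross.1
          omega
        · intro a ha b hb hat hbf htouch hplex
          exact hlab a ha b hb hat hbf htouch hplex
/-! ### Uniqueness of normal forms -/

lemma min_pair_mem (C : Multiset (ℕ × ℕ)) (hC : C ≠ 0) (h : noCrossP C) :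
    (sInf {x | x ∈ C.map Prod.fst}, sInf {x | x ∈ C.map Prod.snd}) ∈ C := by
  obtain ⟨u, hu⟩ := Multiset.exists_mem_of_ne_zero hC
  have hne1 : {x | x ∈ C.map Prod.fst}.Nonempty := ⟨u.1, Multiset.mem_map_of_mem _ hu⟩
  have hne2 : {x | x ∈ C.map Prod.snd}.Nonempty := ⟨u.2, Multiset.mem_map_of_mem _ hu⟩
  obtain ⟨a, ha, haeq⟩ := Multiset.mem_map.1 (Nat.sInf_mem hne1)
  obtain ⟨b, hb, hbeq⟩ := Multiset.mem_map.1 (Nat.sInf_mem hne2)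
  have hle1 : a.1 ≤ b.1 := by
    rw [haeq]
    exact Nat.sInf_le (Multiset.mem_map_of_mem _ hb)
  have hle2 : b.2 ≤ a.2 := by
    rw [hbeq]
    exact Nat.sInf_le (Multiset.mem_map_of_mem _ ha)
  by_cases hab : a.2 = b.2
  · have : (sInf {x | x ∈ C.map Prod.fst}, sInf {x | x ∈ C.map Prod.snd}) = a := by
      apply Prod.ext
      · exact haeq.symm
      · rw [← hbeq, hab]
    rw [this]; exact ha
  · have hlt2 : b.2 < a.2 := by omega
    have heq1 : a.1 = b.1 := by
      by_contra hne
      have hlt1 : a.1 < b.1 := by omega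
      exact h a ha b hb ⟨hlt1, hlt2⟩
    have : (sInf {x | x ∈ C.map Prod.fst}, sInf {x | x ∈ C.map Prod.snd}) = b := by
      apply Prod.ext
      · rw [← haeq, heq1]
      · exact hbeq.symm
    rw [this]; exact hb

lemma noCrossP_of_le {A B : Multiset (ℕ × ℕ)} (hle : A ≤ B) (h : noCrossP B) :
    noCrossP A :=
  fun p hp q hq => h p (Multiset.mem_of_le hle hp) q (Multiset.mem_of_le hle hq)

lemma segs_unique (A : Multiset (ℕ × ℕ)) : ∀ B : Multiset (ℕ × ℕ), noCrossP A → noCrossP B →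
    A.map Prod.fst = B.map Prod.fst → A.map Prod.snd = B.map Prod.snd → A = B := by
  induction A using Multiset.strongInductionOn with
  | ih A ih =>
    intro B hA hB h1 h2
    rcases eq_or_ne A 0 with rfl | hA0
    · have : Multiset.card B = 0 := by
        have := congrArg Multiset.card h1
        simpa using this.symm
      exact (Multiset.card_eq_zero.1 this).symm
    · have hB0 : B ≠ 0 := by
        intro hB0
        apply hA0
        subst hB0
        have := congrArg Multiset.card h1
        simpa using Multiset.card_eq_zero.1 (by simpa using this)
      have hmA := min_pair_mem A hA0 hA
      have hmB := min_pair_mem B hB0 hB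
      rw [← h1, ← h2] at hmB
      set m := (sInf {x | x ∈ A.map Prod.fst}, sInf {x | x ∈ A.map Prod.snd}) with hm
      have hAe : A = m ::ₘ A.erase m := (Multiset.cons_erase hmA).symm
      have hBe : B = m ::ₘ B.erase m := (Multiset.cons_erase hmB).symm
      have hmapf : (A.erase m).map Prod.fst = (B.erase m).map Prod.fst := by
        have : (m ::ₘ A.erase m).map Prod.fst = (m ::ₘ B.erase m).map Prod.fst := by
          rw [← hAe, ← hBe]; exact h1
        rw [Multiset.map_cons, Multiset.map_cons] at this
        exact (Multiset.cons_inj_right _).1 this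
      have hmaps : (A.erase m).map Prod.snd = (B.erase m).map Prod.snd := by
        have : (m ::ₘ A.erase m).map Prod.snd = (m ::ₘ B.erase m).map Prod.snd := by
          rw [← hAe, ← hBe]; exact h2
        rw [Multiset.map_cons, Multiset.map_cons] at this
        exact (Multiset.cons_inj_right _).1 this
      have her : A.erase m = B.erase m :=
        ih (A.erase m) (Multiset.erase_lt.2 hmA)
          (B.erase m)
          (noCrossP_of_le (Multiset.erase_le _ _) hA)
          (noCrossP_of_le (Multiset.erase_le _ _) hB) hmapf hmaps
      rw [hAe, hBe, her]

def fsegs (b : Bool) (M : Multiset (SVar n)) : Multiset (ℕ × ℕ) :=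
  (M.filter fun v => v.1.1 = b).map fun v => (v.1.2.1, v.1.2.2)

lemma fsegs_cons (b : Bool) (v : SVar n) (N : Multiset (SVar n)) :
    fsegs b (v ::ₘ N) = if v.1.1 = b then (v.1.2.1, v.1.2.2) ::ₘ fsegs b N
      else fsegs b N := by
  by_cases h : v.1.1 = b <;> simp [fsegs, Multiset.filter_cons, h]

lemma count_fsegs (b : Bool) (x : SVar n) (hx : x.1.1 = b) (N : Multiset (SVar n)) :
    Multiset.count (x.1.2.1, x.1.2.2) (fsegs b N) = Multiset.count x N := by
  induction N using Multiset.induction with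
  | empty => simp [fsegs]
  | cons v N ihN =>
      rw [fsegs_cons, Multiset.count_cons]
      by_cases hv : v.1.1 = b
      · rw [if_pos hv, Multiset.count_cons, ihN]
        congr 1
        have hiff2 : ((x.1.2.1, x.1.2.2) = (v.1.2.1, v.1.2.2)) ↔ x = v := by
          constructor
          · intro h
            apply Subtype.ext
            simp only [Prod.mk.injEq] at h
            exact Prod.ext (hx.trans hv.symm) (Prod.ext h.1 h.2)
          · rintro rfl; rfl
        simp only [hiff2]
      · rw [if_neg hv, ihN]
        have hne : ¬ x = v := fun h => hv (h ▸ hx)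
        rw [if_neg hne, add_zero]

lemma segs_split (p : ℕ × ℕ) (N : Multiset (SVar n)) :
    Multiset.count p (segs N)
      = Multiset.count p (fsegs true N) + Multiset.count p (fsegs false N) := by
  induction N using Multiset.induction with
  | empty => simp [segs, fsegs]
  | cons v N ihN =>
      rcases hb : v.1.1 with _ | _ <;>
        by_cases hp : (v.1.2.1, v.1.2.2) = p <;>
        simp [segs, fsegs, Multiset.filter_cons, hb, Multiset.count_cons, hp] at ihN ⊢ <;>
        omega

lemma svar_ext (N N' : Multiset (SVar n)) (hsegs : segs N = segs N')
    (hxi : fsegs false N = fsegs false N') : N = N' := by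
  have hpsi : fsegs true N = fsegs true N' := by
    ext p
    have h1 := segs_split p N
    have h2 := segs_split p N'
    rw [hsegs] at h1
    rw [hxi] at h1
    omega
  ext x
  rcases hb : x.1.1 with _ | _
  · rw [← count_fsegs false x hb N, ← count_fsegs false x hb N', hxi]
  · rw [← count_fsegs true x hb N, ← count_fsegs true x hb N', hpsi]

lemma exists_count_gt {α : Type} [DecidableEq α] {K K' : Multiset α}
    (hcard : Multiset.card K = Multiset.card K') (hne : K ≠ K') :
    ∃ x, Multiset.count x K' < Multiset.count x K := by
  by_contra hcon
  push_neg at hcon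
  have hle : K ≤ K' := Multiset.le_iff_count.2 hcon
  exact hne (Multiset.eq_of_le_of_card_le hle (by omega))

lemma mem_fsegs {b : Bool} {p : ℕ × ℕ} {N : Multiset (SVar n)}
    (h : p ∈ fsegs b N) : ∃ u ∈ N, u.1.1 = b ∧ u.1.2.1 = p.1 ∧ u.1.2.2 = p.2 := by
  obtain ⟨u, hu, hueq⟩ := Multiset.mem_map.1 h
  obtain ⟨hu1, hu2⟩ := Multiset.mem_filter.1 hu
  exact ⟨u, hu1, hu2, by rw [← hueq], by rw [← hueq]⟩

lemma xisegs_unique (N N' : Multiset (SVar n)) (hNF : isNF n N) (hNF' : isNF n N')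
    (hsegs : segs N = segs N') (hx : nxi N = nxi N') :
    fsegs false N = fsegs false N' := by
  by_contra hne
  have hcard : Multiset.card (fsegs false N) = Multiset.card (fsegs false N') := by
    simp only [fsegs, Multiset.card_map]
    exact hx
  obtain ⟨x, hxc⟩ := exists_count_gt hcard hne
  obtain ⟨y, hyc⟩ := exists_count_gt hcard.symm (Ne.symm hne)
  have hxmem : x ∈ fsegs false N := by
    rw [← Multiset.count_pos]; omega
  have hymem : y ∈ fsegs false N' := by
    rw [← Multiset.count_pos]; omega
  obtain ⟨u, hu, huf, hux1, hux2⟩ := mem_fsegs hxmem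
  obtain ⟨w, hw, hwf, hwy1, hwy2⟩ := mem_fsegs hymem
  -- x and y are touching segments
  have htx : x.1 = 1 ∨ x.2 = n := by
    rcases u.2.2.2.2 with h | h | h
    · rw [huf] at h; exact Bool.noConfusion h
    · exact Or.inl (by omega)
    · exact Or.inr (by omega)
  have hty : y.1 = 1 ∨ y.2 = n := by
    rcases w.2.2.2.2 with h | h | h
    · rw [hwf] at h; exact Bool.noConfusion h
    · exact Or.inl (by omega)
    · exact Or.inr (by omega)
  -- there is a psi-copy of x in N'
  have hxsegN' : Multiset.count x (fsegs false N') < Multiset.count x (segs N') := by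
    have h1 := segs_split x N
    have h2 := segs_split x N'
    rw [hsegs] at h1
    omega
  have hxpsiN' : 0 < Multiset.count x (fsegs true N') := by
    have := segs_split x N'
    omega
  obtain ⟨u', hu', hu't, hu'x1, hu'x2⟩ :=
    mem_fsegs (Multiset.count_pos.1 hxpsiN')
  -- there is a psi-copy of y in N
  have hysegN : Multiset.count y (fsegs false N) < Multiset.count y (segs N) := by
    have h1 := segs_split y N'
    have h2 := segs_split y N
    have h3 : Multiset.count y (segs N) = Multiset.count y (segs N') := by rw [hsegs]
    omega
  have hypsiN : 0 < Multiset.count y (fsegs true N) := by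
    have := segs_split y N
    omega
  obtain ⟨w', hw', hw't, hw'y1, hw'y2⟩ :=
    mem_fsegs (Multiset.count_pos.1 hypsiN)
  -- x ≠ y
  have hxy : x ≠ y := by
    intro h
    rw [h] at hxc
    omega
  -- apply noLab in both rings
  have hnp1 : ¬ plex (x.1, x.2) (y.1, y.2) := by
    have := hNF'.2 u' hu' w hw hu't hwf ?_
    · rw [hu'x1, hu'x2, hwy1, hwy2] at this
      exact this
    · rcases htx with h | h
      · exact Or.inl (by omega)
      · exact Or.inr (by omega)
  have hnp2 : ¬ plex (y.1, y.2) (x.1, x.2) := by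
    have := hNF.2 w' hw' u hu hw't huf ?_
    · rw [hw'y1, hw'y2, hux1, hux2] at this
      exact this
    · rcases hty with h | h
      · exact Or.inl (by omega)
      · exact Or.inr (by omega)
  -- totality of plex
  have h : ¬(x.1 = y.1 ∧ x.2 = y.2) := fun hc => hxy (Prod.ext hc.1 hc.2)
  have hnp1' : ¬(x.1 < y.1 ∨ (x.1 = y.1 ∧ x.2 < y.2)) := hnp1
  have hnp2' : ¬(y.1 < x.1 ∨ (y.1 = x.1 ∧ y.2 < x.2)) := hnp2
  omega

lemma segs_fst (N : Multiset (SVar n)) : (segs N).map Prod.fst = lefts N := by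
  simp only [segs, lefts, Multiset.map_map]
  rfl

lemma segs_snd (N : Multiset (SVar n)) : (segs N).map Prod.snd = rights N := by
  simp only [segs, rights, Multiset.map_map]
  rfl

lemma nf_unique {N N' : Multiset (SVar n)} (hNF : isNF n N) (hNF' : isNF n N')
    (hl : lefts N = lefts N') (hr : rights N = rights N') (hx : nxi N = nxi N') :
    N = N' := by
  have hsegs : segs N = segs N' := by
    apply segs_unique (segs N) (segs N') hNF.1 hNF'.1
    · rw [segs_fst, segs_fst, hl]
    · rw [segs_snd, segs_snd, hr]
  exact svar_ext N N' hsegs (xisegs_unique N N' hNF hNF' hsegs hx)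

/-! ### Final assembly -/

lemma prodS_toMultiset (d : SVar n →₀ ℕ) :
    prodS (Finsupp.toMultiset d) = monomial d 1 := by
  rw [prodS, prodX_multiset, Finsupp.toMultiset_toFinsupp]

noncomputable def nf (hn : 4 ≤ n) (d : SVar n →₀ ℕ) : Multiset (SVar n) :=
  (exists_nf hn (Finsupp.toMultiset d)).choose

lemma nf_spec (hn : 4 ≤ n) (d : SVar n →₀ ℕ) :
    lefts (nf hn d) = lefts (Finsupp.toMultiset d) ∧
    rights (nf hn d) = rights (Finsupp.toMultiset d) ∧
    nxi (nf hn d) = nxi (Finsupp.toMultiset d) ∧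
    prodS (Finsupp.toMultiset d) - prodS (nf hn d) ∈ Ideal.span (toricGens n) ∧
    isNF n (nf hn d) :=
  (exists_nf hn (Finsupp.toMultiset d)).choose_spec

lemma nf_eq_of_rvars (hn : 4 ≤ n) {d e : SVar n →₀ ℕ}
    (h : rvars (nf hn d) = rvars (nf hn e)) : nf hn d = nf hn e := by
  obtain ⟨hl, hr', hx⟩ := inv_of_rvars h
  exact nf_unique (nf_spec hn d).2.2.2.2 (nf_spec hn e).2.2.2.2 hl hr' hx

lemma ker_le_span (hn : 4 ≤ n) : RingHom.ker (phi' n) ≤ Ideal.span (toricGens n) := by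
  intro p hp
  rw [RingHom.mem_ker] at hp
  set r : Sring n := ∑ d ∈ p.support, (coeff d p) • prodS (nf hn d) with hr
  have hpr : p - r ∈ Ideal.span (toricGens n) := by
    have hpeq : p = ∑ d ∈ p.support, (coeff d p) • prodS (Finsupp.toMultiset d) := by
      conv_lhs => rw [← support_sum_monomial_coeff p]
      refine Finset.sum_congr rfl fun d _ => ?_
      rw [prodS_toMultiset, smul_monomial, smul_eq_mul, mul_one]
    rw [hpeq, hr, ← Finset.sum_sub_distrib]
    apply Ideal.sum_mem
    intro d _
    rw [← smul_sub, smul_eq_C_mul]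
    exact Ideal.mul_mem_left _ _ (nf_spec hn d).2.2.2.1
  have hphir : phi' n r = 0 := by
    have h1 : phi' n (p - r) = 0 := RingHom.mem_ker.1 (span_le_ker hpr)
    rw [map_sub, hp] at h1
    linear_combination -h1
  set g : (SVar n →₀ ℕ) → (SVar n →₀ ℕ) := fun d => Multiset.toFinsupp (nf hn d) with hg
  set h : (SVar n →₀ ℕ) → (RVar →₀ ℕ) := fun d => Multiset.toFinsupp (rvars (nf hn d))
    with hh
  have hprod : ∀ d, prodS (nf hn d) = monomial (g d) 1 := fun d => prodX_multiset _
  have hphi : ∀ d, phi' n (prodS (nf hn d)) = monomial (h d) 1 := fun d => phi'_prodS _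
  have hinj : ∀ d e, h d = h e → g d = g e := by
    intro d e hde
    have h1 : rvars (nf hn d) = rvars (nf hn e) := Multiset.toFinsupp.injective hde
    rw [hg]
    simp only
    rw [nf_eq_of_rvars hn h1]
  have hgh : ∀ d e, g d = g e → h d = h e := by
    intro d e hde
    have h1 : nf hn d = nf hn e := Multiset.toFinsupp.injective hde
    rw [hh]
    simp only
    rw [h1]
  have hr0 : r = 0 := by
    apply MvPolynomial.ext
    intro f
    rw [coeff_zero]
    have hcr : coeff f r = ∑ d ∈ p.support, coeff d p * (if g d = f then 1 else 0) := by
      rw [hr, coeff_sum]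
      refine Finset.sum_congr rfl fun d _ => ?_
      rw [hprod d, coeff_smul, coeff_monomial, smul_eq_mul]
    by_cases hex : ∃ d ∈ p.support, g d = f
    · obtain ⟨d0, hd0, hgd0⟩ := hex
      have hcphi : coeff (h d0) (phi' n r)
          = ∑ d ∈ p.support, coeff d p * (if h d = h d0 then 1 else 0) := by
        rw [hr, map_sum, coeff_sum]
        refine Finset.sum_congr rfl fun d _ => ?_
        rw [map_smul, hphi d, coeff_smul, coeff_monomial, smul_eq_mul]
      have hsum : ∑ d ∈ p.support, coeff d p * (if g d = f then 1 else 0)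
          = ∑ d ∈ p.support, coeff d p * (if h d = h d0 then 1 else 0) := by
        refine Finset.sum_congr rfl fun d _ => ?_
        congr 1
        refine if_congr ?_ rfl rfl
        constructor
        · intro hgd; exact hgh d d0 (hgd.trans hgd0.symm)
        · intro hhd; exact (hinj d d0 hhd).trans hgd0
      rw [hcr, hsum, ← hcphi, hphir, coeff_zero]
    · push_neg at hex
      rw [hcr]
      apply Finset.sum_eq_zero
      intro d hd
      rw [if_neg (hex d hd), mul_zero]
  rw [hr0, sub_zero] at hpr
  exact hpr

end ToricAux

/-- For `n ≥ 4`, the kernel of `φ' : S → R` equals the ideal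
generated by the six families of quadratic binomials. -/
theorem ker_phi'_eq_span (n : ℕ) (hn : 4 ≤ n) :
    RingHom.ker (phi' n) = Ideal.span (toricGens n) :=
  le_antisymm (ToricAux.ker_le_span hn) ToricAux.span_le_ker
end
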